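/- arXiv:1804.01211 — 8 statements merged into one kernel-verified Lean document; each statement's English description precedes it below -/
import Mathlib

section
/- Any F_q-linear subspace C of F_q^{m×n} in which every nonzero matrix has rank at least δ satisfies dim_{F_q}(C) ≤ max{m,n}·(min{m,n} − δ + 1) (the Singleton-like bound for rank-metric codes). -/
open Module

lemma aux_rank_bound (Fq : Type*) [Field Fq] (m n k : ℕ) (hk : k ≤ m)
    (M : Matrix (Fin m) (Fin n) Fq) (hM : ∀ i : Fin m, (i : ℕ) < k → ∀ j, M i j = 0) :
    M.rank ≤ m - k := by
  classical
  let p : (Fin m → Fq) →ₗ[Fq] (Fin k → Fq) :=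
    LinearMap.funLeft Fq Fq (Fin.castLE hk)
  have hsurj : Function.Surjective p := LinearMap.funLeft_surjective_of_injective _ _ _
    (Fin.castLE_injective hk)
  have hker : finrank Fq (LinearMap.ker p) = m - k := by
    have h1 := p.finrank_range_add_finrank_ker
    rw [LinearMap.range_eq_top.mpr hsurj] at h1
    simp only [finrank_top, finrank_pi, Fintype.card_fin] at h1
    omega
  have hle : LinearMap.range M.mulVecLin ≤ LinearMap.ker p := by
    rintro _ ⟨v, rfl⟩
    ext i
    simp only [p, LinearMap.funLeft_apply, Matrix.mulVecLin_apply, Matrix.mulVec, Pi.zero_apply,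
      dotProduct]
    exact Finset.sum_eq_zero fun j _ => by
      rw [hM _ (by simp) j, zero_mul]
  calc M.rank ≤ finrank Fq (LinearMap.ker p) := Submodule.finrank_mono hle
    _ = m - k := hker

lemma aux_singleton (Fq : Type*) [Field Fq] (m n δ : ℕ) (hδ : 1 ≤ δ) (hδm : δ ≤ m)
    (C : Submodule Fq (Matrix (Fin m) (Fin n) Fq))
    (h : ∀ M ∈ C, M ≠ 0 → δ ≤ M.rank) :
    Module.finrank Fq C ≤ n * (m - δ + 1) := by
  classical
  set k : ℕ := m - δ + 1 with hkdef
  have hk : k ≤ m := by omega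
  let f : C →ₗ[Fq] Matrix (Fin k) (Fin n) Fq :=
    { toFun := fun M => (M : Matrix (Fin m) (Fin n) Fq).submatrix (Fin.castLE hk) id
      map_add' := fun A B => by ext i j; simp [Matrix.submatrix]
      map_smul' := fun c A => by ext i j; simp [Matrix.submatrix] }
  have hinj : Function.Injective f := by
    rw [injective_iff_map_eq_zero]
    intro M hM
    have hrows : ∀ i : Fin m, (i : ℕ) < k → ∀ j, (M : Matrix (Fin m) (Fin n) Fq) i j = 0 := by
      intro i hi j
      have := congrFun (congrFun hM ⟨i, hi⟩) j
      simpa [f, Matrix.submatrix] using this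
    have hrank : (M : Matrix (Fin m) (Fin n) Fq).rank ≤ m - k :=
      aux_rank_bound Fq m n k hk _ hrows
    by_contra hne
    have hMne : (M : Matrix (Fin m) (Fin n) Fq) ≠ 0 := by
      simpa [Submodule.coe_eq_zero] using hne
    have := h M M.2 hMne
    omega
  have := LinearMap.finrank_le_finrank_of_injective hinj
  calc finrank Fq C ≤ finrank Fq (Matrix (Fin k) (Fin n) Fq) := this
    _ = k * n * 1 := by
        rw [finrank_matrix]; simp
    _ ≤ n * (m - δ + 1) := by rw [mul_one, mul_comm]

/-- Singleton-like bound for rank-metric codes: an `F_q`-linear subspace of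
`F_q^{m×n}` whose nonzero members all have rank at least `δ ≥ 1` has dimension
at most `max{m,n} * (min{m,n} - δ + 1)`. -/
theorem stmt2 (Fq : Type*) [Field Fq] [Fintype Fq] (m n δ : ℕ) (hδ : 1 ≤ δ)
    (C : Submodule Fq (Matrix (Fin m) (Fin n) Fq))
    (h : ∀ M ∈ C, M ≠ 0 → δ ≤ M.rank) :
    Module.finrank Fq C ≤ max m n * (min m n - δ + 1) := by
  classical
  rcases le_or_gt δ (min m n) with hsmall | hbig
  · rcases le_total m n with hmn | hnm
    · rw [min_eq_left hmn, max_eq_right hmn]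
      exact aux_singleton Fq m n δ hδ (le_trans hsmall (min_le_left m n)) C h
    · rw [min_eq_right hnm, max_eq_left hnm]
      let e := Matrix.transposeLinearEquiv (Fin m) (Fin n) Fq Fq
      have hEq : finrank Fq (C.map (e : Matrix (Fin m) (Fin n) Fq →ₗ[Fq]
          Matrix (Fin n) (Fin m) Fq)) = finrank Fq C :=
        LinearEquiv.finrank_map_eq e C
      rw [← hEq]
      refine aux_singleton Fq n m δ hδ (le_trans hsmall (min_le_right m n)) _ ?_
      rintro M hM hMne
      rcases Submodule.mem_map.mp hM with ⟨N, hN, rfl⟩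
      have hNne : N ≠ 0 := by
        rintro rfl
        exact hMne (by simp [e])
      rw [show ((e : Matrix (Fin m) (Fin n) Fq →ₗ[Fq] Matrix (Fin n) (Fin m) Fq) N) = N.transpose from rfl, Matrix.rank_transpose]
      exact h N hN hNne
  · have hbot : C = ⊥ := by
      rw [Submodule.eq_bot_iff]
      intro M hM
      by_contra hne
      have h1 := h M hM hne
      have h2 : M.rank ≤ n := M.rank_le_width
      have h3 : M.rank ≤ m := M.rank_le_height
      omega
    rw [hbot, finrank_bot]
    exact Nat.zero_le _
end

section
/- Let F be an m×n Ferrers diagram and C_F an [F, k, δ]_q Ferrers diagram rank-metric code. Then k ≤ min over i ∈ {0,...,δ−1} of v_i, where v_i is the number of dots in F that are not contained in the first i rows and not in the rightmost δ−1−i columns. -/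
/-!
A codeword vanishing on the dots of `F` that lie below the first `i` rows and left of the
last `δ - 1 - i` columns is supported on `i` rows and `δ - 1 - i` columns, so its rank is
below `δ` and it is zero. Restricting codewords to those dots is therefore injective, which
bounds the dimension of the code by their number.
-/

/-- An `m×n` Ferrers diagram: a set of dots in `[m]×[n]`, shifted to the right,
with non-increasing row lengths downwards, full first row and full rightmost column. -/
def IsFerrersDiagram (m n : ℕ) (F : Finset (ℕ × ℕ)) : Prop :=
  (∀ p ∈ F, p.1 < m ∧ p.2 < n) ∧
  (∀ p ∈ F, 1 ≤ p.1 → (p.1 - 1, p.2) ∈ F) ∧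
  (∀ p ∈ F, p.2 + 1 < n → (p.1, p.2 + 1) ∈ F) ∧
  (∀ j < n, (0, j) ∈ F) ∧
  (∀ i < m, (i, n - 1) ∈ F)

open Finset Module

namespace Matrix

variable {m n K : Type*} [Fintype n] [Field K]

theorem rank_add_le (A B : Matrix m n K) : (A + B).rank ≤ A.rank + B.rank := by
  rw [rank, rank, rank, mulVecLin_add]
  exact (Submodule.finrank_mono (LinearMap.range_add_le _ _)).trans
    (Submodule.finrank_add_le_finrank_add_finrank _ _)

theorem rank_le_card_of_col_support_subset [Fintype m] (A : Matrix m n K) (t : Finset n)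
    (h : Function.support A.col ⊆ t) : A.rank ≤ #t := by
  rw [← rank_transpose]
  exact rank_le_card_of_support_subset Aᵀ t h

theorem rank_le_card_add_card_of_forall_eq_zero [Fintype m] (A : Matrix m n K) (s : Finset m)
    (t : Finset n) (h : ∀ i ∉ s, ∀ j ∉ t, A i j = 0) : A.rank ≤ #s + #t := by
  classical
  set R : Matrix m n K := of fun i j => if i ∈ s then A i j else 0
  have hR : Function.support R.row ⊆ s := by
    refine Function.support_subset_iff'.mpr fun i hi => ?_
    ext j
    simp [R, row, Finset.mem_coe.not.mp hi]
  have hAR : Function.support (A - R).col ⊆ t := by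
    refine Function.support_subset_iff'.mpr fun j hj => ?_
    ext i
    by_cases hi : i ∈ s <;> simp [R, col, hi, h i _ j hj]
  calc A.rank = (R + (A - R)).rank := by rw [add_sub_cancel]
    _ ≤ R.rank + (A - R).rank := rank_add_le _ _
    _ ≤ #s + #t := add_le_add (rank_le_card_of_support_subset R s hR)
        (rank_le_card_of_col_support_subset _ t hAR)

end Matrix

theorem Submodule.finrank_le_card_of_eq_zero_of_vanishing_on {m n K : Type*} [Field K]
    (C : Submodule K (Matrix m n K)) (P : Finset (m × n))
    (hP : ∀ M ∈ C, (∀ p ∈ P, M p.1 p.2 = 0) → M = 0) : finrank K C ≤ #P := by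
  let restrict : C →ₗ[K] (P → K) :=
    LinearMap.pi fun p => Matrix.entryLinearMap K K p.1.1 p.1.2 ∘ₗ C.subtype
  have hinj : Function.Injective restrict := by
    refine (injective_iff_map_eq_zero restrict).mpr fun M hM => Subtype.ext ?_
    exact hP M M.2 fun p hp => congrFun hM ⟨p, hp⟩
  calc finrank K C ≤ finrank K (P → K) := LinearMap.finrank_le_finrank_of_injective hinj
    _ = #P := by simp

theorem Fin.card_filter_le_val_add_le (n t : ℕ) : #{j : Fin n | n ≤ j + t} ≤ t := by
  have hsplit := card_filter_add_card_filter_not (s := univ) fun j : Fin n => (j : ℕ) < n - t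
  have hsub : #{j : Fin n | n ≤ j + t} ≤ #{j : Fin n | ¬ (j : ℕ) < n - t} :=
    card_le_card (monotone_filter_right _ fun j hj => by omega)
  rw [Fin.card_filter_val_lt, card_univ, Fintype.card_fin] at hsplit
  omega

theorem stmt3_general (Fq : Type*) [Field Fq]
    (m n k δ : ℕ) (F : Finset (ℕ × ℕ))
    (C : Submodule Fq (Matrix (Fin m) (Fin n) Fq))
    (hsupp : ∀ M ∈ C, ∀ (i : Fin m) (j : Fin n), ((i : ℕ), (j : ℕ)) ∉ F → M i j = 0)
    (hdim : Module.finrank Fq C = k)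
    (hrank : ∀ M ∈ C, M ≠ 0 → δ ≤ M.rank) :
    ∀ i < δ, k ≤ (F.filter (fun p => i ≤ p.1 ∧ p.2 + (δ - 1 - i) < n)).card := by
  intro i hi
  set t := δ - 1 - i
  let P : Finset (Fin m × Fin n) := {p | ((p.1 : ℕ), (p.2 : ℕ)) ∈ F ∧ i ≤ p.1 ∧ p.2 + t < n}
  have hker : ∀ M ∈ C, (∀ p ∈ P, M p.1 p.2 = 0) → M = 0 := by
    intro M hM hMP
    have hcross : M.rank ≤ i + t := by
      refine (M.rank_le_card_add_card_of_forall_eq_zero {a | (a : ℕ) < i} {b | n ≤ b + t}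
        fun a ha b hb => ?_).trans
        (add_le_add ((Fin.card_filter_val_lt).trans_le (min_le_right _ _))
          (Fin.card_filter_le_val_add_le n t))
      simp only [mem_filter, mem_univ, true_and, not_lt, not_le] at ha hb
      by_cases haF : ((a : ℕ), (b : ℕ)) ∈ F
      · exact hMP (a, b) (by simp [P, haF, ha, hb])
      · exact hsupp M hM a b haF
    by_contra hne
    have := hrank M hM hne
    omega
  calc k = finrank Fq C := hdim.symm
    _ ≤ #P := C.finrank_le_card_of_eq_zero_of_vanishing_on P hker
    _ ≤ _ := card_le_card_of_injOn (Prod.map Fin.val Fin.val)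
        (fun p hp => by simpa [P, Prod.map] using hp)
        (Fin.val_injective.prodMap Fin.val_injective).injOn

/-- Singleton-like bound for Ferrers diagram rank-metric codes (Etzion–Silberstein):
if `C` is an `[F, k, δ]_q` code then `k ≤ v_i` for every `i ∈ [δ]`, where `v_i` is
the number of dots of `F` not in the first `i` rows nor in the rightmost `δ-1-i` columns. -/
theorem stmt3 (Fq : Type*) [Field Fq] [Fintype Fq]
    (m n k δ : ℕ) (hδ : 1 ≤ δ) (F : Finset (ℕ × ℕ))
    (hF : IsFerrersDiagram m n F)
    (C : Submodule Fq (Matrix (Fin m) (Fin n) Fq))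
    (hsupp : ∀ M ∈ C, ∀ (i : Fin m) (j : Fin n), ((i : ℕ), (j : ℕ)) ∉ F → M i j = 0)
    (hdim : Module.finrank Fq C = k)
    (hrank : ∀ M ∈ C, M ≠ 0 → δ ≤ M.rank) :
    ∀ i < δ, k ≤ (F.filter (fun p => i ≤ p.1 ∧ p.2 + (δ - 1 - i) < n)).card :=
  stmt3_general Fq m n k δ F C hsupp hdim hrank
end

section
/- Let m ≥ n and let G = (I_k | A) ∈ F_{q^m}^{k×n} be a generator matrix (in vector representation) of a maximum rank distance code with minimum rank distance δ = n−k+1. Fix integers 0 ≤ λ_0 ≤ λ_1 ≤ ... ≤ λ_{k−1} ≤ m and a basis β of F_{q^m} over F_q. Let U be the set of vectors (u_0,...,u_{k−1}) ∈ F_{q^m}^k such that the coordinate vector of u_i with respect to β is supported in its first λ_i positions. Then C = {Ψ_m(uG) : u ∈ U} is an F_q-linear code of m×n matrices with dimension Σ_{i=0}^{k−1} λ_i in which every nonzero matrix has rank at least δ. -/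
/-- Expansion `Ψ` of a vector over the extension field `L` into a matrix over `F_q`:
the `j`-th column is the coordinate vector of the `j`-th entry w.r.t. the basis `b`. -/
noncomputable def expand {Fq L : Type*} [Field Fq] [Field L] [Algebra Fq L]
    {m n : ℕ} (b : Module.Basis (Fin m) Fq L) (v : Fin n → L) :
    Matrix (Fin m) (Fin n) Fq :=
  Matrix.of fun i j => b.repr (v j) i

/-!
The set `U` is the `F_q`-span of the basis vectors `b j` placed in slot `i`, for `j < λ_i`, so
it is a subspace of dimension `Σ λ_i`. The map `u ↦ Ψ(uG)` is `F_q`-linear, and the MRD bound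
makes it injective: a nonzero `u` with `Ψ(uG) = 0` would give the zero matrix rank `≥ n - k + 1`.
Hence `C`, the image of `U`, has dimension `Σ λ_i` and inherits the rank bound.
-/

open Module Submodule

theorem Module.Basis.finrank_span_image {K V ι : Type*} [Field K] [AddCommGroup V]
    [Module K V] (b : Basis ι K V) (s : Set ι) [Fintype s] :
    finrank K (span K (b '' s)) = Fintype.card s := by
  rw [Set.image_eq_range]
  exact finrank_span_eq_card (b.linearIndependent.comp _ Subtype.val_injective)

theorem Fintype.card_sigma_fin_lt_of_le {ι : Type*} [Fintype ι] {m : ℕ} (lam : ι → ℕ)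
    (hlam : ∀ i, lam i ≤ m) :
    Fintype.card {x : Σ _ : ι, Fin m // (x.2 : ℕ) < lam x.1} = ∑ i, lam i := by
  let e : {x : Σ _ : ι, Fin m // (x.2 : ℕ) < lam x.1} ≃ Σ i, {j : Fin m // (j : ℕ) < lam i} :=
    ⟨fun x => ⟨x.1.1, x.1.2, x.2⟩, fun x => ⟨⟨x.1, x.2.1⟩, x.2.2⟩, fun _ => rfl, fun _ => rfl⟩
  rw [Fintype.card_congr e, Fintype.card_sigma]
  exact Finset.sum_congr rfl fun i _ => Fintype.card_fin_lt_of_le (hlam i)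

section

variable {K L ι : Type*} [Field K] [Field L] [Algebra K L] [Fintype ι] {m n : ℕ}

noncomputable def expandLinearMap (b : Basis (Fin m) K L) :
    (Fin n → L) →ₗ[K] Matrix (Fin m) (Fin n) K where
  toFun := expand b
  map_add' u v := by ext; simp [expand]
  map_smul' c u := by ext; simp [expand]

noncomputable def truncatedSubspace (b : Basis (Fin m) K L) (lam : ι → ℕ) :
    Submodule K (ι → L) :=
  span K (Pi.basis (fun _ => b) '' {x | (x.2 : ℕ) < lam x.1})

theorem coe_truncatedSubspace (b : Basis (Fin m) K L) (lam : ι → ℕ) :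
    (truncatedSubspace b lam : Set (ι → L)) =
      {u | ∀ i (j : Fin m), lam i ≤ (j : ℕ) → b.repr (u i) j = 0} := by
  ext u
  simp only [truncatedSubspace, SetLike.mem_coe, Basis.mem_span_image, Set.subset_def,
    Finsupp.mem_support_iff, Pi.basis_repr, Set.mem_ofPred_eq, Sigma.forall]
  exact forall₂_congr fun i j => by rw [← not_le, not_imp_not]

theorem finrank_truncatedSubspace (b : Basis (Fin m) K L) (lam : ι → ℕ)
    (hlam : ∀ i, lam i ≤ m) :
    finrank K (truncatedSubspace b lam) = ∑ i, lam i := by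
  rw [truncatedSubspace, Basis.finrank_span_image]
  exact Fintype.card_sigma_fin_lt_of_le lam hlam

end

theorem stmt7_general (Fq L : Type*) [Field Fq] [Field L] [Algebra Fq L]
    (m n k : ℕ)
    (b : Module.Basis (Fin m) Fq L)
    (G : Matrix (Fin k) (Fin n) L)
    (hMRD : ∀ u : Fin k → L, u ≠ 0 →
      n - k + 1 ≤ (expand b (Matrix.vecMul u G)).rank)
    (lam : Fin k → ℕ) (hlam : ∀ i, lam i ≤ m) :
    ∃ C : Submodule Fq (Matrix (Fin m) (Fin n) Fq),
      (↑C : Set (Matrix (Fin m) (Fin n) Fq)) =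
        (fun u => expand b (Matrix.vecMul u G)) ''
          {u : Fin k → L | ∀ (i : Fin k) (j : Fin m),
            lam i ≤ (j : ℕ) → b.repr (u i) j = 0} ∧
      Module.finrank Fq C = ∑ i, lam i ∧
      (∀ M ∈ C, M ≠ 0 → n - k + 1 ≤ M.rank) := by
  let Ψ := expandLinearMap b ∘ₗ G.vecMulLinear.restrictScalars Fq
  have hΨ : Function.Injective Ψ := by
    refine (injective_iff_map_eq_zero Ψ).2 fun u hu => by_contra fun hu0 => ?_
    have hexp : expand b (Matrix.vecMul u G) = 0 := hu
    simpa [hexp] using hMRD u hu0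
  refine ⟨(truncatedSubspace b lam).map Ψ, ?_, ?_, ?_⟩
  · rw [map_coe, coe_truncatedSubspace]
    rfl
  · rw [← LinearEquiv.finrank_eq (Submodule.equivMapOfInjective Ψ hΨ _),
      finrank_truncatedSubspace b lam hlam]
  · rintro _ ⟨u, -, rfl⟩ hM
    exact hMRD u (by rintro rfl; exact hM (map_zero Ψ))

/-- Lemma 3.1 of the paper: if `G = (I_k | A)` generates a systematic
MRD `[m×n, δ]_q` code (`δ = n-k+1`, `m ≥ n`) and `0 ≤ λ₀ ≤ ⋯ ≤ λ_{k-1} ≤ m`,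
then `C = {Ψ_m(uG) : u ∈ U}`, where `U` consists of vectors whose `i`-th
coordinate is supported in the first `λ_i` basis positions, is an `F_q`-linear
code of dimension `Σ λ_i` all of whose nonzero matrices have rank at least `δ`. -/
theorem stmt7 (Fq L : Type*) [Field Fq] [Fintype Fq] [Field L] [Algebra Fq L]
    (m n k : ℕ) (hnm : n ≤ m) (hkn : k ≤ n)
    (b : Module.Basis (Fin m) Fq L)
    (G : Matrix (Fin k) (Fin n) L)
    (hsys : ∀ (i : Fin k) (j : Fin n), (j : ℕ) < k →
      G i j = if (i : ℕ) = (j : ℕ) then 1 else 0)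
    (hMRD : ∀ u : Fin k → L, u ≠ 0 →
      n - k + 1 ≤ (expand b (Matrix.vecMul u G)).rank)
    (lam : Fin k → ℕ) (hmono : Monotone lam) (hlam : ∀ i, lam i ≤ m) :
    ∃ C : Submodule Fq (Matrix (Fin m) (Fin n) Fq),
      (↑C : Set (Matrix (Fin m) (Fin n) Fq)) =
        (fun u => expand b (Matrix.vecMul u G)) ''
          {u : Fin k → L | ∀ (i : Fin k) (j : Fin m),
            lam i ≤ (j : ℕ) → b.repr (u i) j = 0} ∧
      Module.finrank Fq C = ∑ i, lam i ∧
      (∀ M ∈ C, M ≠ 0 → n - k + 1 ≤ M.rank) :=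
  stmt7_general Fq L m n k b G hMRD lam hlam
end

section
/- Let m ≥ n and let G ∈ F_{q^m}^{k×n} generate an F_{q^m}-linear code C ⊆ F_{q^m}^n. Then the rank-metric code Ψ_m(C) ⊆ F_q^{m×n} is MRD (every nonzero matrix has rank ≥ n−k+1) if and only if for every n×n upper triangular matrix B over F_q with all diagonal entries equal to 1, every k×k minor of GB is nonzero. -/
open Matrix Module

section Expansion

variable {F L : Type*} [Field F] [Field L] [Algebra F L]

theorem rank_expand {m n : ℕ} (b : Basis (Fin m) F L) (c : Fin n → L) :
    (expand b c).rank = finrank F (Submodule.span F (Set.range c)) := by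
  have hcols : Set.range (expand b c).col = b.equivFun '' Set.range c := by
    rw [← Set.range_comp]
    rfl
  rw [rank_eq_finrank_span_cols, hcols, ← LinearEquiv.coe_coe, ← Submodule.map_span,
    LinearEquiv.finrank_map_eq]

theorem rank_expand_add_finrank_ker {m n : ℕ} (b : Basis (Fin m) F L) (c : Fin n → L) :
    (expand b c).rank + finrank F (LinearMap.ker (Fintype.linearCombination F c)) = n := by
  rw [rank_expand, ← Fintype.range_linearCombination, LinearMap.finrank_range_add_finrank_ker,
    finrank_fin_fun]

theorem vecMul_map_algebraMap_apply {ι κ : Type*} [Fintype ι] (c : ι → L) (B : Matrix ι κ F)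
    (j : κ) : (c ᵥ* B.map (algebraMap F L)) j = Fintype.linearCombination F c (B.col j) := by
  simp [vecMul, dotProduct, Fintype.linearCombination_apply, Algebra.smul_def, mul_comm]

end Expansion

theorem det_submatrix_mul_eq_zero_iff {K ι n p : Type*} [Field K] [Fintype ι] [DecidableEq ι]
    [Fintype n] {G : Matrix ι n K} (hG : LinearIndependent K G.row) (A : Matrix n p K)
    (cols : ι → p) :
    ((G * A).submatrix id cols).det = 0 ↔
      ∃ c ∈ Submodule.span K (Set.range G.row), c ≠ 0 ∧ ∀ t, (c ᵥ* A) (cols t) = 0 := by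
  have hinj : Function.Injective G.vecMul := vecMul_injective_iff.mpr hG
  have hspan : ∀ c, c ∈ Submodule.span K (Set.range G.row) ↔ ∃ x, x ᵥ* G = c := fun c => by
    rw [← range_vecMulLinear, LinearMap.mem_range]
    rfl
  have hsub : ∀ x, x ᵥ* (G * A).submatrix id cols = 0 ↔ ∀ t, (x ᵥ* G ᵥ* A) (cols t) = 0 :=
    fun x => by simp only [funext_iff, Pi.zero_apply, vecMul_vecMul]; rfl
  simp_rw [← exists_vecMul_eq_zero_iff, hsub, hspan]
  constructor
  · rintro ⟨x, hx, hA⟩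
    exact ⟨_, ⟨x, rfl⟩, fun h => hx (hinj (h.trans (zero_vecMul G).symm)), hA⟩
  · rintro ⟨_, ⟨x, rfl⟩, hc, hA⟩
    exact ⟨x, fun hx => hc (by rw [hx, zero_vecMul]), hA⟩

section Echelon

variable {F : Type*} [Field F]

theorem exists_last_ne_zero {ι : Type*} [Fintype ι] [LinearOrder ι] {v : ι → F} (hv : v ≠ 0) :
    ∃ i, v i ≠ 0 ∧ ∀ j, i < j → v j = 0 := by
  classical
  obtain ⟨j, hj⟩ := Function.ne_iff.mp hv
  obtain ⟨i, hi, hmax⟩ := Finset.exists_max_image {j | v j ≠ 0} id ⟨j, by simpa using hj⟩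
  refine ⟨i, by simpa using hi, fun j hij => ?_⟩
  by_contra hj
  exact (hmax j (by simpa using hj)).not_gt hij

open Classical in
noncomputable def pivots {ι : Type*} [Fintype ι] [LinearOrder ι] (K : Submodule F (ι → F)) :
    Finset ι :=
  {i | ∃ v ∈ K, v i ≠ 0 ∧ ∀ j, i < j → v j = 0}

theorem finrank_le_card_pivots {ι : Type*} [Fintype ι] [LinearOrder ι]
    (K : Submodule F (ι → F)) : finrank F K ≤ (pivots K).card := by
  classical
  let restrict := (LinearMap.funLeft F F ((↑) : pivots K → ι)).domRestrict K
  have hinj : Function.Injective restrict := by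
    rw [← LinearMap.ker_eq_bot, LinearMap.ker_eq_bot']
    intro v hv
    by_contra hv0
    obtain ⟨i, hi, hlast⟩ := exists_last_ne_zero (v := (v : ι → F)) (by simpa using hv0)
    have hpiv : i ∈ pivots K := by
      simp only [pivots, Finset.mem_filter, Finset.mem_univ, true_and]
      exact ⟨v, v.2, hi, hlast⟩
    exact hi (congrFun hv ⟨i, hpiv⟩)
  simpa using LinearMap.finrank_le_finrank_of_injective hinj

theorem exists_echelon_family {n k : ℕ} (K : Submodule F (Fin n → F)) (hk : k ≤ finrank F K) :
    ∃ cols : Fin k → Fin n, StrictMono cols ∧ ∃ w : Fin k → Fin n → F,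
      ∀ t, w t ∈ K ∧ w t (cols t) = 1 ∧ ∀ j, cols t < j → w t j = 0 := by
  classical
  obtain ⟨Q, hQ, hQcard⟩ := Finset.exists_subset_card_eq (hk.trans (finrank_le_card_pivots K))
  let cols := Q.orderEmbOfFin hQcard
  have hpiv : ∀ t, ∃ v ∈ K, v (cols t) ≠ 0 ∧ ∀ j, cols t < j → v j = 0 := fun t => by
    simpa [pivots] using hQ (Q.orderEmbOfFin_mem hQcard t)
  choose v hvK hv hvlast using hpiv
  refine ⟨cols, cols.strictMono, fun t => (v t (cols t))⁻¹ • v t,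
    fun t => ⟨K.smul_mem _ (hvK t), ?_, fun j hj => ?_⟩⟩
  · simp [inv_mul_cancel₀ (hv t)]
  · simp [hvlast t j hj]

theorem exists_upperTriangular_col_eq {ι κ : Type*} [LinearOrder ι] {cols : κ → ι}
    (hcols : Function.Injective cols) {w : κ → ι → F} (hw₁ : ∀ t, w t (cols t) = 1)
    (hw₀ : ∀ t j, cols t < j → w t j = 0) :
    ∃ B : Matrix ι ι F, B.IsUpperTriangular ∧ (∀ i, B i i = 1) ∧ ∀ t, B.col (cols t) = w t := by
  let B : Matrix ι ι F := of fun i j => Function.extend cols w (fun j => Pi.single j 1) j i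
  have hB : ∀ t, B.col (cols t) = w t :=
    fun t => hcols.extend_apply w (fun j => Pi.single j (1 : F)) t
  have hB' : ∀ j, j ∉ Set.range cols → B.col j = Pi.single j 1 :=
    fun j hj => Function.extend_apply' w (fun j => Pi.single j (1 : F)) j hj
  refine ⟨B, fun i j hji => ?_, fun i => ?_, hB⟩
  · by_cases hj : j ∈ Set.range cols
    · obtain ⟨t, rfl⟩ := hj
      exact (congrFun (hB t) i).trans (hw₀ t i hji)
    · exact (congrFun (hB' j hj) i).trans (Pi.single_eq_of_ne hji.ne' 1)
  · by_cases hi : i ∈ Set.range cols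
    · obtain ⟨t, rfl⟩ := hi
      exact (congrFun (hB t) _).trans (hw₁ t)
    · exact (congrFun (hB' i hi) i).trans (Pi.single_eq_same i 1)

theorem le_finrank_iff_exists_upperUnitriangular {n k : ℕ} (K : Submodule F (Fin n → F)) :
    k ≤ finrank F K ↔ ∃ B : Matrix (Fin n) (Fin n) F, B.IsUpperTriangular ∧ (∀ i, B i i = 1) ∧
      ∃ cols : Fin k → Fin n, StrictMono cols ∧ ∀ t, B.col (cols t) ∈ K := by
  constructor
  · intro hk
    obtain ⟨cols, hcols, w, hw⟩ := exists_echelon_family K hk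
    obtain ⟨B, hupper, hdiag, hB⟩ := exists_upperTriangular_col_eq hcols.injective
      (fun t => (hw t).2.1) (fun t => (hw t).2.2)
    exact ⟨B, hupper, hdiag, cols, hcols, fun t => hB t ▸ (hw t).1⟩
  · rintro ⟨B, hupper, hdiag, cols, hcols, hK⟩
    have hunit : IsUnit B := by
      simp [isUnit_iff_isUnit_det, det_of_isUpperTriangular hupper, hdiag]
    have hindep : LinearIndependent F (B.col ∘ cols) :=
      (linearIndependent_cols_iff_isUnit.mpr hunit).comp cols hcols.injective
    calc k = finrank F (Submodule.span F (Set.range (B.col ∘ cols))) := by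
          rw [finrank_span_eq_card hindep, Fintype.card_fin]
      _ ≤ finrank F K := Submodule.finrank_mono <| Submodule.span_le.mpr <| by
          rintro _ ⟨t, rfl⟩
          exact hK t

end Echelon

theorem stmt8_general (Fq L : Type*) [Field Fq] [Field L] [Algebra Fq L]
    (m n k : ℕ)
    (b : Module.Basis (Fin m) Fq L)
    (G : Matrix (Fin k) (Fin n) L)
    (hG : LinearIndependent L (fun i => G i)) :
    (∀ c ∈ Submodule.span L (Set.range fun i => G i), c ≠ 0 →
        n - k + 1 ≤ (expand b c).rank) ↔
    (∀ B : Matrix (Fin n) (Fin n) Fq,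
        (∀ i, B i i = 1) → (∀ i j : Fin n, (j : ℕ) < (i : ℕ) → B i j = 0) →
        ∀ cols : Fin k → Fin n, StrictMono cols →
          ((G * B.map (algebraMap Fq L)).submatrix id cols).det ≠ 0) := by
  have hkn : k ≤ n := by simpa using hG.fintype_card_le_finrank
  have hrank : ∀ c : Fin n → L, n - k + 1 ≤ (expand b c).rank ↔
      ¬ k ≤ finrank Fq (LinearMap.ker (Fintype.linearCombination Fq c)) := fun c => by
    have := rank_expand_add_finrank_ker b c
    omega
  have hminor : ∀ (B : Matrix (Fin n) (Fin n) Fq) (cols : Fin k → Fin n),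
      ((G * B.map (algebraMap Fq L)).submatrix id cols).det = 0 ↔
        ∃ c ∈ Submodule.span L (Set.range fun i => G i), c ≠ 0 ∧
          ∀ t, B.col (cols t) ∈ LinearMap.ker (Fintype.linearCombination Fq c) := fun B cols => by
    simp only [det_submatrix_mul_eq_zero_iff hG, vecMul_map_algebraMap_apply, LinearMap.mem_ker]
    rfl
  constructor
  · intro hMRD B hdiag hupper cols hcols hdet
    obtain ⟨c, hc, hc0, hker⟩ := (hminor B cols).mp hdet
    exact (hrank c).mp (hMRD c hc hc0) <| (le_finrank_iff_exists_upperUnitriangular _).mpr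
      ⟨B, fun i j hji => hupper i j hji, hdiag, cols, hcols, hker⟩
  · intro hMinors c hc hc0
    refine (hrank c).mpr fun hk => ?_
    obtain ⟨B, hupper, hdiag, cols, hcols, hker⟩ :=
      (le_finrank_iff_exists_upperUnitriangular _).mp hk
    exact hMinors B hdiag (fun i j hji => hupper hji) cols hcols
      ((hminor B cols).mpr ⟨c, hc, hc0, hker⟩)

/-- Criterion for linear MRD codes: for `m ≥ n` and `G ∈ F_{q^m}^{k×n}` a generator
matrix (with independent rows), the code generated by `G` is MRD (every nonzero
codeword has rank `≥ n-k+1` after expansion over `F_q`) iff for every upper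
unitriangular `B ∈ F_q^{n×n}` every `k×k` minor of `GB` is nonzero. -/
theorem stmt8 (Fq L : Type*) [Field Fq] [Fintype Fq] [Field L] [Algebra Fq L]
    (m n k : ℕ) (hnm : n ≤ m) (hkn : k ≤ n)
    (b : Module.Basis (Fin m) Fq L)
    (G : Matrix (Fin k) (Fin n) L)
    (hG : LinearIndependent L (fun i => G i)) :
    (∀ c ∈ Submodule.span L (Set.range fun i => G i), c ≠ 0 →
        n - k + 1 ≤ (expand b c).rank) ↔
    (∀ B : Matrix (Fin n) (Fin n) Fq,
        (∀ i, B i i = 1) → (∀ i j : Fin n, (j : ℕ) < (i : ℕ) → B i j = 0) →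
        ∀ cols : Fin k → Fin n, StrictMono cols →
          ((G * B.map (algebraMap Fq L)).submatrix id cols).det ≠ 0) :=
  stmt8_general Fq L m n k b G hG
end

section
/- Let F be a proper combination of Ferrers diagrams F_1 and F_2 via injections φ_1, φ_2, and let M_1, M_2 be matrices supported in F_1, F_2 respectively. Define the matrix M_12 supported in F by transporting the entries of M_1 and M_2 along φ_1 and φ_2. Then rank(M_12) ≤ rank(M_1) + rank(M_2). -/
/-- `F` is a proper combination of `F₁` and `F₂` on the pair of injections `φ₁, φ₂`. -/
def IsProperCombination (F F1 F2 : Finset (ℕ × ℕ))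
    (φ1 φ2 : ℕ × ℕ → ℕ × ℕ) : Prop :=
  (∀ p ∈ F1, φ1 p ∈ F) ∧ (∀ p ∈ F2, φ2 p ∈ F) ∧
  (∀ p ∈ F1, ∀ q ∈ F1, φ1 p = φ1 q → p = q) ∧
  (∀ p ∈ F2, ∀ q ∈ F2, φ2 p = φ2 q → p = q) ∧
  (∀ p ∈ F1, ∀ q ∈ F2, φ1 p ≠ φ2 q) ∧
  F1.card + F2.card = F.card ∧
  (∀ p ∈ F1, ∀ q ∈ F1, (p.1 = q.1 ∨ p.2 = q.2) →
    ((φ1 p).1 = (φ1 q).1 ∨ (φ1 p).2 = (φ1 q).2)) ∧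
  (∀ p ∈ F2, ∀ q ∈ F2, (p.1 = q.1 ∨ p.2 = q.2) →
    ((φ2 p).1 = (φ2 q).1 ∨ (φ2 p).2 = (φ2 q).2))

open Finset Matrix

section Aux

/-- A pairwise-collinearity condition implies all points lie in a common row
or a common column. -/
lemma ferrers_line_lemma {α : Type*} (s : Finset α) (g : α → ℕ × ℕ)
    (h : ∀ x ∈ s, ∀ y ∈ s, (g x).1 = (g y).1 ∨ (g x).2 = (g y).2) :
    (∃ r, ∀ x ∈ s, (g x).1 = r) ∨ (∃ c, ∀ x ∈ s, (g x).2 = c) := by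
  rcases s.eq_empty_or_nonempty with rfl | ⟨x0, hx0⟩
  · exact Or.inl ⟨0, by simp⟩
  by_cases hall : ∀ x ∈ s, (g x).1 = (g x0).1
  · exact Or.inl ⟨_, hall⟩
  push_neg at hall
  obtain ⟨x1, hx1, hne⟩ := hall
  have hc : (g x1).2 = (g x0).2 := (h x1 hx1 x0 hx0).resolve_left hne
  right
  refine ⟨(g x0).2, fun x hx => ?_⟩
  by_contra hxc
  have h0 := (h x hx x0 hx0).resolve_right hxc
  have h1 := (h x hx x1 hx1).resolve_right (fun hh => hxc (hh.trans hc))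
  exact hne (h1.symm.trans h0)

/-- Structure lemma: a line-preserving injection on a Ferrers diagram either maps
everything into a single row, a single column, or is of product type or of
transposed product type. -/
lemma ferrers_struct_lemma (a b : ℕ) (S : Finset (ℕ × ℕ))
    (hS : IsFerrersDiagram a b S)
    (φ : ℕ × ℕ → ℕ × ℕ)
    (hinj : ∀ p ∈ S, ∀ q ∈ S, φ p = φ q → p = q)
    (hshare : ∀ p ∈ S, ∀ q ∈ S, (p.1 = q.1 ∨ p.2 = q.2) →
      ((φ p).1 = (φ q).1 ∨ (φ p).2 = (φ q).2)) :
    (∃ r, ∀ p ∈ S, (φ p).1 = r) ∨ (∃ c, ∀ p ∈ S, (φ p).2 = c) ∨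
    (∃ σ τ : ℕ → ℕ, ∀ p ∈ S, φ p = (σ p.1, τ p.2)) ∨
    (∃ σ τ : ℕ → ℕ, ∀ p ∈ S, φ p = (τ p.2, σ p.1)) := by
  obtain ⟨hb, hup, hright, hrow0, hcolb⟩ := hS
  by_cases hb0 : b = 0
  · exact Or.inl ⟨0, fun p hp => absurd (hb p hp).2 (by omega)⟩
  by_cases ha1 : a ≤ 1
  · have h01 : ∀ x ∈ S, ∀ y ∈ S, (φ x).1 = (φ y).1 ∨ (φ x).2 = (φ y).2 := by
      intro p hp q hq
      exact hshare p hp q hq (Or.inl (by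
        have h1 := (hb p hp).1; have h2 := (hb q hq).1; omega))
    rcases ferrers_line_lemma S φ h01 with h | h
    · exact Or.inl h
    · exact Or.inr (Or.inl h)
  by_cases hb1 : b = 1
  · have h01 : ∀ x ∈ S, ∀ y ∈ S, (φ x).1 = (φ y).1 ∨ (φ x).2 = (φ y).2 := by
      intro p hp q hq
      exact hshare p hp q hq (Or.inr (by
        have h1 := (hb p hp).2; have h2 := (hb q hq).2; omega))
    rcases ferrers_line_lemma S φ h01 with h | h
    · exact Or.inl h
    · exact Or.inr (Or.inl h)
  have hb2 : 2 ≤ b := by omega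
  have ha2 : 2 ≤ a := by omega
  have hrowmem : ∀ j < b, (0, j) ∈ S := hrow0
  have hcolmem : ∀ i < a, (i, b - 1) ∈ S := hcolb
  have hbm1 : b - 1 < b := by omega
  rcases ferrers_line_lemma (Finset.range b) (fun j => φ (0, j))
      (fun j hj k hk => hshare _ (hrowmem j (mem_range.1 hj)) _
        (hrowmem k (mem_range.1 hk)) (Or.inl rfl)) with ⟨r0, hr0⟩ | ⟨c0, hc0⟩ <;>
    rcases ferrers_line_lemma (Finset.range a) (fun i => φ (i, b - 1))
      (fun i hi k hk => hshare _ (hcolmem i (mem_range.1 hi)) _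
        (hcolmem k (mem_range.1 hk)) (Or.inr rfl)) with ⟨rC, hrC⟩ | ⟨cC, hcC⟩
  -- Case RR : everything into row r0
  · replace hr0 : ∀ j < b, (φ (0, j)).1 = r0 := fun j hj => hr0 j (mem_range.2 hj)
    replace hrC : ∀ i < a, (φ (i, b - 1)).1 = rC := fun i hi => hrC i (mem_range.2 hi)
    have hrCr0 : rC = r0 := (hrC 0 (by omega)).symm.trans (hr0 (b - 1) hbm1)
    left
    refine ⟨r0, ?_⟩
    have key : ∀ i j, (i, j) ∈ S → (φ (i, j)).1 = r0 := by
      intro i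
      induction i with
      | zero => exact fun j hj => hr0 j (hb (0, j) hj).2
      | succ i ih =>
        intro j hj
        by_cases hjb : j = b - 1
        · subst hjb; exact (hrC (i + 1) (hb _ hj).1).trans hrCr0
        · have hj1 : (i, j) ∈ S := by
            have := hup (i + 1, j) hj (by omega)
            simpa using this
          have hq1 := ih j hj1
          have hjba : (i + 1, b - 1) ∈ S := hcolmem (i + 1) (hb _ hj).1
          have hq2 : (φ (i + 1, b - 1)).1 = r0 := (hrC (i + 1) (hb _ hj).1).trans hrCr0
          rcases hshare (i + 1, j) hj (i, j) hj1 (Or.inr rfl) with h1 | h1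
          · rw [h1]; exact hq1
          · rcases hshare (i + 1, j) hj (i + 1, b - 1) hjba (Or.inl rfl) with h2 | h2
            · rw [h2]; exact hq2
            · have heq : φ (i, j) = φ (i + 1, b - 1) :=
                Prod.ext (hq1.trans hq2.symm) (h1.symm.trans h2)
              have := hinj _ hj1 _ hjba heq
              simp only [Prod.mk.injEq] at this
              omega
    intro p hp
    have := key p.1 p.2 (by rwa [Prod.mk.eta])
    rwa [Prod.mk.eta] at this
  -- Case RC : product type
  · replace hr0 : ∀ j < b, (φ (0, j)).1 = r0 := fun j hj => hr0 j (mem_range.2 hj)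
    replace hcC : ∀ i < a, (φ (i, b - 1)).2 = cC := fun i hi => hcC i (mem_range.2 hi)
    right; right; left
    refine ⟨fun i => (φ (i, b - 1)).1, fun j => (φ (0, j)).2, ?_⟩
    have key : ∀ i j, (i, j) ∈ S → φ (i, j) = ((φ (i, b - 1)).1, (φ (0, j)).2) := by
      intro i
      induction i with
      | zero =>
        intro j hj
        exact Prod.ext ((hr0 j (hb _ hj).2).trans (hr0 (b - 1) hbm1).symm) rfl
      | succ i ih =>
        intro j hj
        have hia : i + 1 < a := (hb _ hj).1
        by_cases hjb : j = b - 1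
        · subst hjb
          exact Prod.ext rfl ((hcC (i + 1) hia).trans (hcC 0 (by omega)).symm)
        · have hjlt : j < b := (hb _ hj).2
          have hj1 : (i, j) ∈ S := by
            have := hup (i + 1, j) hj (by omega)
            simpa using this
          have hq1 := ih j hj1
          have hjba : (i + 1, b - 1) ∈ S := hcolmem (i + 1) hia
          have hiba : (i, b - 1) ∈ S := hcolmem i (by omega)
          have hcs := hshare (i + 1, j) hj (i, j) hj1 (Or.inr rfl)
          have hrs := hshare (i + 1, j) hj (i + 1, b - 1) hjba (Or.inl rfl)
          by_cases hx2 : (φ (i + 1, j)).2 = cC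
          · exfalso
            have hτc : (φ (0, j)).2 ≠ cC := by
              intro h
              have heq : φ (0, j) = φ (0, b - 1) :=
                Prod.ext ((hr0 j hjlt).trans (hr0 (b - 1) hbm1).symm)
                  (h.trans (hcC 0 (by omega)).symm)
              have := hinj _ (hrowmem j hjlt) _ (hrowmem (b - 1) hbm1) heq
              simp only [Prod.mk.injEq] at this
              omega
            rcases hcs with hA | hA
            · have heq : φ (i + 1, j) = φ (i, b - 1) := by
                refine Prod.ext ?_ ?_
                · rw [hA, hq1]
                · rw [hx2, hcC i (by omega)]
              have := hinj _ hj _ hiba heq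
              simp only [Prod.mk.injEq] at this
              omega
            · rw [hq1] at hA
              exact hτc (hA.symm.trans hx2)
          · have hB : (φ (i + 1, j)).1 = (φ (i + 1, b - 1)).1 := by
              rcases hrs with hB | hB
              · exact hB
              · exact absurd (hB.trans (hcC (i + 1) hia)) hx2
            rcases hcs with hA | hA
            · exfalso
              have heq : φ (i, b - 1) = φ (i + 1, b - 1) := by
                refine Prod.ext ?_ ?_
                · rw [hq1] at hA
                  exact (hA.symm.trans hB)
                · rw [hcC i (by omega), hcC (i + 1) hia]
              have := hinj _ hiba _ hjba heq
              simp only [Prod.mk.injEq] at this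
              omega
            · rw [hq1] at hA
              exact Prod.ext hB hA
    intro p hp
    have := key p.1 p.2 (by rwa [Prod.mk.eta])
    rwa [Prod.mk.eta] at this
  -- Case CR : transposed product type
  · replace hc0 : ∀ j < b, (φ (0, j)).2 = c0 := fun j hj => hc0 j (mem_range.2 hj)
    replace hrC : ∀ i < a, (φ (i, b - 1)).1 = rC := fun i hi => hrC i (mem_range.2 hi)
    right; right; right
    refine ⟨fun i => (φ (i, b - 1)).2, fun j => (φ (0, j)).1, ?_⟩
    have key : ∀ i j, (i, j) ∈ S → φ (i, j) = ((φ (0, j)).1, (φ (i, b - 1)).2) := by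
      intro i
      induction i with
      | zero =>
        intro j hj
        exact Prod.ext rfl ((hc0 j (hb _ hj).2).trans (hc0 (b - 1) hbm1).symm)
      | succ i ih =>
        intro j hj
        have hia : i + 1 < a := (hb _ hj).1
        by_cases hjb : j = b - 1
        · subst hjb
          exact Prod.ext ((hrC (i + 1) hia).trans (hrC 0 (by omega)).symm) rfl
        · have hjlt : j < b := (hb _ hj).2
          have hj1 : (i, j) ∈ S := by
            have := hup (i + 1, j) hj (by omega)
            simpa using this
          have hq1 := ih j hj1
          have hjba : (i + 1, b - 1) ∈ S := hcolmem (i + 1) hia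
          have hiba : (i, b - 1) ∈ S := hcolmem i (by omega)
          have hcs := hshare (i + 1, j) hj (i, j) hj1 (Or.inr rfl)
          have hrs := hshare (i + 1, j) hj (i + 1, b - 1) hjba (Or.inl rfl)
          by_cases hx1 : (φ (i + 1, j)).1 = rC
          · exfalso
            have hτr : (φ (0, j)).1 ≠ rC := by
              intro h
              have heq : φ (0, j) = φ (0, b - 1) :=
                Prod.ext (h.trans (hrC 0 (by omega)).symm)
                  ((hc0 j hjlt).trans (hc0 (b - 1) hbm1).symm)
              have := hinj _ (hrowmem j hjlt) _ (hrowmem (b - 1) hbm1) heq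
              simp only [Prod.mk.injEq] at this
              omega
            rcases hcs with hA | hA
            · rw [hq1] at hA
              exact hτr (hA.symm.trans hx1)
            · have heq : φ (i + 1, j) = φ (i, b - 1) := by
                refine Prod.ext ?_ ?_
                · rw [hx1, hrC i (by omega)]
                · rw [hA, hq1]
              have := hinj _ hj _ hiba heq
              simp only [Prod.mk.injEq] at this
              omega
          · have hB : (φ (i + 1, j)).2 = (φ (i + 1, b - 1)).2 := by
              rcases hrs with hB | hB
              · exact absurd (hB.trans (hrC (i + 1) hia)) hx1
              · exact hB
            rcases hcs with hA | hA
            · rw [hq1] at hA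
              exact Prod.ext hA hB
            · exfalso
              have heq : φ (i, b - 1) = φ (i + 1, b - 1) := by
                refine Prod.ext ?_ ?_
                · rw [hrC i (by omega), hrC (i + 1) hia]
                · rw [hq1] at hA
                  exact (hA.symm.trans hB)
              have := hinj _ hiba _ hjba heq
              simp only [Prod.mk.injEq] at this
              omega
    intro p hp
    have := key p.1 p.2 (by rwa [Prod.mk.eta])
    rwa [Prod.mk.eta] at this
  -- Case CC : everything into column c0
  · replace hc0 : ∀ j < b, (φ (0, j)).2 = c0 := fun j hj => hc0 j (mem_range.2 hj)
    replace hcC : ∀ i < a, (φ (i, b - 1)).2 = cC := fun i hi => hcC i (mem_range.2 hi)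
    have hcCc0 : cC = c0 := (hcC 0 (by omega)).symm.trans (hc0 (b - 1) hbm1)
    right; left
    refine ⟨c0, ?_⟩
    have key : ∀ i j, (i, j) ∈ S → (φ (i, j)).2 = c0 := by
      intro i
      induction i with
      | zero => exact fun j hj => hc0 j (hb (0, j) hj).2
      | succ i ih =>
        intro j hj
        by_cases hjb : j = b - 1
        · subst hjb; exact (hcC (i + 1) (hb _ hj).1).trans hcCc0
        · have hj1 : (i, j) ∈ S := by
            have := hup (i + 1, j) hj (by omega)
            simpa using this
          have hq1 := ih j hj1
          have hjba : (i + 1, b - 1) ∈ S := hcolmem (i + 1) (hb _ hj).1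
          have hq2 : (φ (i + 1, b - 1)).2 = c0 := (hcC (i + 1) (hb _ hj).1).trans hcCc0
          rcases hshare (i + 1, j) hj (i, j) hj1 (Or.inr rfl) with h1 | h1
          · rcases hshare (i + 1, j) hj (i + 1, b - 1) hjba (Or.inl rfl) with h2 | h2
            · have heq : φ (i, j) = φ (i + 1, b - 1) :=
                Prod.ext (h1.symm.trans h2) (hq1.trans hq2.symm)
              have := hinj _ hj1 _ hjba heq
              simp only [Prod.mk.injEq] at this
              omega
            · rw [h2]; exact hq2
          · rw [h1]; exact hq1
    intro p hp
    have := key p.1 p.2 (by rwa [Prod.mk.eta])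
    rwa [Prod.mk.eta] at this

variable {Fq : Type*} [Field Fq]

/-- Entry of a matrix at a pair of naturals, or `0` if out of bounds. -/
noncomputable def Mval {a b : ℕ} (M : Matrix (Fin a) (Fin b) Fq) (p : ℕ × ℕ) : Fq :=
  if h : p.1 < a ∧ p.2 < b then M ⟨p.1, h.1⟩ ⟨p.2, h.2⟩ else 0

/-- The matrix obtained by transporting the entries of `M` along `φ`. -/
noncomputable def auxM (m n : ℕ) {a b : ℕ} (S : Finset (ℕ × ℕ)) (φ : ℕ × ℕ → ℕ × ℕ)
    (M : Matrix (Fin a) (Fin b) Fq) : Matrix (Fin m) (Fin n) Fq :=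
  Matrix.of fun i j => ∑ p ∈ S.filter (fun p => φ p = ((i : ℕ), (j : ℕ))), Mval M p

lemma auxM_eq_of {m n a b : ℕ} (S : Finset (ℕ × ℕ)) (φ : ℕ × ℕ → ℕ × ℕ)
    (M : Matrix (Fin a) (Fin b) Fq)
    (hinj : ∀ p ∈ S, ∀ q ∈ S, φ p = φ q → p = q)
    {p : ℕ × ℕ} (hp : p ∈ S) {i : Fin m} {j : Fin n}
    (hφ : φ p = ((i : ℕ), (j : ℕ))) :
    auxM m n S φ M i j = Mval M p := by
  unfold auxM
  rw [Matrix.of_apply]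
  refine Finset.sum_eq_single_of_mem p (Finset.mem_filter.2 ⟨hp, hφ⟩) ?_
  intro q hq hne
  exfalso
  obtain ⟨hqS, hqφ⟩ := Finset.mem_filter.1 hq
  exact hne (hinj q hqS p hp (hqφ.trans hφ.symm))

lemma auxM_eq_zero {m n a b : ℕ} (S : Finset (ℕ × ℕ)) (φ : ℕ × ℕ → ℕ × ℕ)
    (M : Matrix (Fin a) (Fin b) Fq)
    {i : Fin m} {j : Fin n}
    (h : ¬ ∃ p ∈ S, φ p = ((i : ℕ), (j : ℕ))) :
    auxM m n S φ M i j = 0 := by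
  unfold auxM
  rw [Matrix.of_apply]
  refine Finset.sum_eq_zero ?_
  intro q hq
  obtain ⟨hqS, hqφ⟩ := Finset.mem_filter.1 hq
  exact absurd ⟨q, hqS, hqφ⟩ h

/-- A matrix supported in a single row has rank at most one. -/
lemma rank_le_one_of_row {m n : ℕ} (A : Matrix (Fin m) (Fin n) Fq) (r : ℕ)
    (h : ∀ i j, A i j ≠ 0 → (i : ℕ) = r) : A.rank ≤ 1 := by
  classical
  set B : Matrix (Fin m) (Fin 1) Fq :=
    Matrix.of fun i _ => if (i : ℕ) = r then (1 : Fq) else 0 with hB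
  set C : Matrix (Fin 1) (Fin n) Fq :=
    Matrix.of fun _ j => if hr : r < m then A ⟨r, hr⟩ j else 0 with hC
  have hBC : A = B * C := by
    ext i j
    rw [Matrix.mul_apply, Fin.sum_univ_one]
    by_cases hi : (i : ℕ) = r
    · have hr : r < m := hi ▸ i.isLt
      have hir : i = ⟨r, hr⟩ := Fin.ext hi
      simp only [hB, hC, Matrix.of_apply, if_pos hi, dif_pos hr, one_mul]
      rw [hir]
    · simp only [hB, Matrix.of_apply, if_neg hi, zero_mul]
      by_contra hA
      exact hi (h i j hA)
  rw [hBC]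
  refine le_trans (Matrix.rank_mul_le_left B C) ?_
  refine le_trans (Matrix.rank_le_card_width B) ?_
  simp

/-- A nonzero matrix has rank at least one. -/
lemma one_le_rank_of_ne_zero {m n : ℕ} (A : Matrix (Fin m) (Fin n) Fq)
    (i : Fin m) (j : Fin n) (h : A i j ≠ 0) : 1 ≤ A.rank := by
  classical
  have hv : A.mulVecLin (Pi.single j 1) ≠ 0 := by
    intro hz
    apply h
    have := congrFun hz i
    simpa [Matrix.mulVecLin_apply] using this
  have hx : (⟨A.mulVecLin (Pi.single j 1), LinearMap.mem_range_self _ _⟩ :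
      LinearMap.range A.mulVecLin) ≠ 0 := by
    simpa [Submodule.mk_eq_zero] using hv
  have hpos : 0 < Module.finrank Fq (LinearMap.range A.mulVecLin) :=
    Module.finrank_pos_iff_exists_ne_zero.2 ⟨_, hx⟩
  exact hpos

/-- Rank bound for matrices obtained via a product-type cell transport. -/
lemma rank_transport_prod {m n a b : ℕ} (S : Finset (ℕ × ℕ)) (σ τ : ℕ → ℕ)
    (M : Matrix (Fin a) (Fin b) Fq)
    (hbound : ∀ p ∈ S, p.1 < a ∧ p.2 < b)
    (hinj : ∀ p ∈ S, ∀ q ∈ S, σ p.1 = σ q.1 → τ p.2 = τ q.2 → p = q)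
    (hM : ∀ (i : Fin a) (j : Fin b), ((i : ℕ), (j : ℕ)) ∉ S → M i j = 0)
    (A : Matrix (Fin m) (Fin n) Fq)
    (hA1 : ∀ p ∈ S, ∀ (r : Fin m) (c : Fin n), σ p.1 = (r : ℕ) → τ p.2 = (c : ℕ) →
      A r c = Mval M p)
    (hA0 : ∀ (r : Fin m) (c : Fin n),
      (¬ ∃ p ∈ S, σ p.1 = (r : ℕ) ∧ τ p.2 = (c : ℕ)) → A r c = 0) :
    A.rank ≤ M.rank := by
  classical
  set P : Matrix (Fin m) (Fin a) Fq :=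
    Matrix.of fun r i => if σ (i : ℕ) = (r : ℕ) then (1 : Fq) else 0 with hP
  set Q : Matrix (Fin b) (Fin n) Fq :=
    Matrix.of fun j c => if τ (j : ℕ) = (c : ℕ) then (1 : Fq) else 0 with hQ
  have key : A = P * M * Q := by
    ext r c
    have expand : (P * M * Q) r c =
        ∑ j : Fin b, ∑ i : Fin a,
          (if σ (i : ℕ) = (r : ℕ) ∧ τ (j : ℕ) = (c : ℕ) then M i j else 0) := by
      rw [Matrix.mul_apply]
      refine Finset.sum_congr rfl fun j _ => ?_
      rw [Matrix.mul_apply, Finset.sum_mul]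
      refine Finset.sum_congr rfl fun i _ => ?_
      by_cases h1 : σ (i : ℕ) = (r : ℕ) <;> by_cases h2 : τ (j : ℕ) = (c : ℕ) <;>
        simp [hP, hQ, h1, h2]
    rw [expand]
    by_cases hex : ∃ p ∈ S, σ p.1 = (r : ℕ) ∧ τ p.2 = (c : ℕ)
    · obtain ⟨p, hp, hσ, hτ⟩ := hex
      obtain ⟨hpa, hpb⟩ := hbound p hp
      rw [hA1 p hp r c hσ hτ]
      rw [Finset.sum_eq_single_of_mem (⟨p.2, hpb⟩ : Fin b) (Finset.mem_univ _) ?_]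
      · rw [Finset.sum_eq_single_of_mem (⟨p.1, hpa⟩ : Fin a) (Finset.mem_univ _) ?_]
        · rw [if_pos ⟨hσ, hτ⟩]
          unfold Mval
          rw [dif_pos ⟨hpa, hpb⟩]
        · intro i _ hne
          by_cases hcond : σ (i : ℕ) = (r : ℕ) ∧ τ (p.2 : ℕ) = (c : ℕ)
          · rw [if_pos hcond]
            by_cases hmem : ((i : ℕ), p.2) ∈ S
            · exfalso
              have heq := hinj _ hmem p hp (hcond.1.trans hσ.symm) rfl
              exact hne (Fin.ext (congrArg Prod.fst heq))
            · exact hM i ⟨p.2, hpb⟩ hmem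
          · rw [if_neg hcond]
      · intro j' _ hne
        refine Finset.sum_eq_zero fun i _ => ?_
        by_cases hcond : σ (i : ℕ) = (r : ℕ) ∧ τ (j' : ℕ) = (c : ℕ)
        · rw [if_pos hcond]
          by_cases hmem : ((i : ℕ), (j' : ℕ)) ∈ S
          · exfalso
            have heq := hinj _ hmem p hp (hcond.1.trans hσ.symm) (hcond.2.trans hτ.symm)
            exact hne (Fin.ext (congrArg Prod.snd heq))
          · exact hM i j' hmem
        · rw [if_neg hcond]
    · push_neg at hex
      rw [hA0 r c (by push_neg; exact hex)]
      refine (Finset.sum_eq_zero fun j _ => Finset.sum_eq_zero fun i _ => ?_).symm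
      by_cases hcond : σ (i : ℕ) = (r : ℕ) ∧ τ (j : ℕ) = (c : ℕ)
      · rw [if_pos hcond]
        by_cases hmem : ((i : ℕ), (j : ℕ)) ∈ S
        · exact absurd hcond.2 (hex _ hmem hcond.1)
        · exact hM i j hmem
      · rw [if_neg hcond]
  rw [key]
  exact le_trans (Matrix.rank_mul_le_left (P * M) Q) (Matrix.rank_mul_le_right P M)

/-- The rank of the transported matrix is at most the rank of the original. -/
lemma rank_auxM_le {m n a b : ℕ} (S : Finset (ℕ × ℕ))
    (hS : IsFerrersDiagram a b S) (φ : ℕ × ℕ → ℕ × ℕ)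
    (hinj : ∀ p ∈ S, ∀ q ∈ S, φ p = φ q → p = q)
    (hshare : ∀ p ∈ S, ∀ q ∈ S, (p.1 = q.1 ∨ p.2 = q.2) →
      ((φ p).1 = (φ q).1 ∨ (φ p).2 = (φ q).2))
    (M : Matrix (Fin a) (Fin b) Fq)
    (hM : ∀ (i : Fin a) (j : Fin b), ((i : ℕ), (j : ℕ)) ∉ S → M i j = 0) :
    (auxM m n S φ M).rank ≤ M.rank := by
  classical
  set A : Matrix (Fin m) (Fin n) Fq := auxM m n S φ M with hA
  have hbound : ∀ p ∈ S, p.1 < a ∧ p.2 < b := hS.1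
  have hAnz : ∀ (i : Fin m) (j : Fin n), A i j ≠ 0 →
      ∃ p ∈ S, φ p = ((i : ℕ), (j : ℕ)) := by
    intro i j hij
    by_contra hcon
    exact hij (auxM_eq_zero S φ M hcon)
  rcases ferrers_struct_lemma a b S hS φ hinj hshare with ⟨r, hr⟩ | ⟨c, hc⟩ |
      ⟨σ, τ, hform⟩ | ⟨σ, τ, hform⟩
  · -- single row
    by_cases hA0 : A = 0
    · rw [hA0, Matrix.rank_zero]; exact Nat.zero_le _
    · have hAex : ∃ i j, A i j ≠ 0 := by
        by_contra hcon
        push_neg at hcon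
        exact hA0 (by ext i j; simpa using hcon i j)
      obtain ⟨i, j, hij⟩ := hAex
      obtain ⟨p, hp, hφ⟩ := hAnz i j hij
      have hAij : A i j = Mval M p := auxM_eq_of S φ M hinj hp hφ
      obtain ⟨hpa, hpb⟩ := hbound p hp
      have hMne : M ⟨p.1, hpa⟩ ⟨p.2, hpb⟩ ≠ 0 := by
        intro hz
        apply hij
        rw [hAij]
        unfold Mval
        rw [dif_pos ⟨hpa, hpb⟩, hz]
      refine le_trans (rank_le_one_of_row A r ?_) (one_le_rank_of_ne_zero M _ _ hMne)
      intro i' j' hne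
      obtain ⟨q, hq, hqφ⟩ := hAnz i' j' hne
      have := hr q hq
      rw [hqφ] at this
      exact this
  · -- single column
    by_cases hA0 : A = 0
    · rw [hA0, Matrix.rank_zero]; exact Nat.zero_le _
    · have hAex : ∃ i j, A i j ≠ 0 := by
        by_contra hcon
        push_neg at hcon
        exact hA0 (by ext i j; simpa using hcon i j)
      obtain ⟨i, j, hij⟩ := hAex
      obtain ⟨p, hp, hφ⟩ := hAnz i j hij
      have hAij : A i j = Mval M p := auxM_eq_of S φ M hinj hp hφ
      obtain ⟨hpa, hpb⟩ := hbound p hp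
      have hMne : M ⟨p.1, hpa⟩ ⟨p.2, hpb⟩ ≠ 0 := by
        intro hz
        apply hij
        rw [hAij]
        unfold Mval
        rw [dif_pos ⟨hpa, hpb⟩, hz]
      have htr : A.rank = Aᵀ.rank := (Matrix.rank_transpose A).symm
      rw [htr]
      refine le_trans (rank_le_one_of_row Aᵀ c ?_) (one_le_rank_of_ne_zero M _ _ hMne)
      intro i' j' hne
      have hne' : A j' i' ≠ 0 := hne
      obtain ⟨q, hq, hqφ⟩ := hAnz j' i' hne'
      have := hc q hq
      rw [hqφ] at this
      exact this
  · -- product type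
    refine rank_transport_prod S σ τ M hbound ?_ hM A ?_ ?_
    · intro p hp q hq h1 h2
      refine hinj p hp q hq ?_
      rw [hform p hp, hform q hq, h1, h2]
    · intro p hp r c h1 h2
      refine auxM_eq_of S φ M hinj hp ?_
      rw [hform p hp, h1, h2]
    · intro r c hne
      refine auxM_eq_zero S φ M ?_
      rintro ⟨p, hp, hφ⟩
      rw [hform p hp] at hφ
      simp only [Prod.mk.injEq] at hφ
      exact hne ⟨p, hp, hφ.1, hφ.2⟩
  · -- transposed product type
    have htrM : M.rank = Mᵀ.rank := (Matrix.rank_transpose M).symm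
    rw [htrM]
    refine rank_transport_prod (S.image (fun p => (p.2, p.1))) τ σ Mᵀ ?_ ?_ ?_ A ?_ ?_
    · rintro q hq
      obtain ⟨p, hp, rfl⟩ := Finset.mem_image.1 hq
      exact ⟨(hbound p hp).2, (hbound p hp).1⟩
    · rintro q hq q' hq' h1 h2
      obtain ⟨p, hp, rfl⟩ := Finset.mem_image.1 hq
      obtain ⟨p', hp', rfl⟩ := Finset.mem_image.1 hq'
      have := hinj p hp p' hp' (by rw [hform p hp, hform p' hp', h1, h2])
      rw [this]
    · intro i j hmem
      have : ((j : ℕ), (i : ℕ)) ∉ S := by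
        intro hc
        exact hmem (Finset.mem_image.2 ⟨_, hc, rfl⟩)
      exact hM j i this
    · rintro q hq r c h1 h2
      obtain ⟨p, hp, rfl⟩ := Finset.mem_image.1 hq
      have hAval : A r c = Mval M p := by
        refine auxM_eq_of S φ M hinj hp ?_
        rw [hform p hp, h1, h2]
      rw [hAval]
      obtain ⟨hpa, hpb⟩ := hbound p hp
      unfold Mval
      rw [dif_pos ⟨hpa, hpb⟩, dif_pos ⟨hpb, hpa⟩]
      rfl
    · intro r c hne
      refine auxM_eq_zero S φ M ?_
      rintro ⟨p, hp, hφ⟩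
      rw [hform p hp] at hφ
      simp only [Prod.mk.injEq] at hφ
      exact hne ⟨(p.2, p.1), Finset.mem_image.2 ⟨p, hp, rfl⟩, hφ.1, hφ.2⟩

/-- Subadditivity of matrix rank. -/
lemma matrix_rank_add_le {m n : ℕ} (A B : Matrix (Fin m) (Fin n) Fq) :
    (A + B).rank ≤ A.rank + B.rank := by
  classical
  have hrange : LinearMap.range (A + B).mulVecLin ≤
      LinearMap.range A.mulVecLin ⊔ LinearMap.range B.mulVecLin := by
    rintro x ⟨v, rfl⟩
    rw [Matrix.mulVecLin_add]
    exact Submodule.mem_sup.2 ⟨_, ⟨v, rfl⟩, _, ⟨v, rfl⟩, rfl⟩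
  refine le_trans (Submodule.finrank_mono hrange) ?_
  exact Submodule.finrank_add_le_finrank_add_finrank _ _

end Aux

/-- Lemma 4.4 of the paper: if `F` is a proper combination of `F₁` and `F₂` and
`M₁₂` is obtained by transporting the entries of `M₁` and `M₂` (supported in
`F₁`, `F₂`) along `φ₁`, `φ₂`, then `rank(M₁₂) ≤ rank(M₁) + rank(M₂)`. -/
theorem stmt12 (Fq : Type*) [Field Fq] [Fintype Fq]
    (m n m1 n1 m2 n2 : ℕ)
    (F F1 F2 : Finset (ℕ × ℕ))
    (hF : IsFerrersDiagram m n F)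
    (hF1 : IsFerrersDiagram m1 n1 F1)
    (hF2 : IsFerrersDiagram m2 n2 F2)
    (φ1 φ2 : ℕ × ℕ → ℕ × ℕ)
    (hcomb : IsProperCombination F F1 F2 φ1 φ2)
    (M1 : Matrix (Fin m1) (Fin n1) Fq) (M2 : Matrix (Fin m2) (Fin n2) Fq)
    (hM1 : ∀ (i : Fin m1) (j : Fin n1), ((i : ℕ), (j : ℕ)) ∉ F1 → M1 i j = 0)
    (hM2 : ∀ (i : Fin m2) (j : Fin n2), ((i : ℕ), (j : ℕ)) ∉ F2 → M2 i j = 0)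
    (M12 : Matrix (Fin m) (Fin n) Fq)
    (h1 : ∀ (i1 : Fin m1) (j1 : Fin n1) (i : Fin m) (j : Fin n),
      ((i1 : ℕ), (j1 : ℕ)) ∈ F1 → φ1 ((i1 : ℕ), (j1 : ℕ)) = ((i : ℕ), (j : ℕ)) →
      M12 i j = M1 i1 j1)
    (h2 : ∀ (i2 : Fin m2) (j2 : Fin n2) (i : Fin m) (j : Fin n),
      ((i2 : ℕ), (j2 : ℕ)) ∈ F2 → φ2 ((i2 : ℕ), (j2 : ℕ)) = ((i : ℕ), (j : ℕ)) →
      M12 i j = M2 i2 j2)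
    (h0 : ∀ (i : Fin m) (j : Fin n),
      (¬ ∃ p ∈ F1, φ1 p = ((i : ℕ), (j : ℕ))) →
      (¬ ∃ p ∈ F2, φ2 p = ((i : ℕ), (j : ℕ))) → M12 i j = 0) :
    M12.rank ≤ M1.rank + M2.rank := by
  classical
  obtain ⟨hφ1F, hφ2F, hinj1, hinj2, hdisj, hcard, hsh1, hsh2⟩ := hcomb
  have hkey : M12 = auxM m n F1 φ1 M1 + auxM m n F2 φ2 M2 := by
    ext i j
    rw [Matrix.add_apply]
    by_cases e1 : ∃ p ∈ F1, φ1 p = ((i : ℕ), (j : ℕ))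
    · obtain ⟨p, hp, he⟩ := e1
      obtain ⟨hpa, hpb⟩ := hF1.1 p hp
      have hM12 : M12 i j = M1 ⟨p.1, hpa⟩ ⟨p.2, hpb⟩ := by
        refine h1 ⟨p.1, hpa⟩ ⟨p.2, hpb⟩ i j ?_ ?_
        · simpa [Prod.mk.eta] using hp
        · simpa [Prod.mk.eta] using he
      have hA1 : auxM m n F1 φ1 M1 i j = Mval M1 p := auxM_eq_of F1 φ1 M1 hinj1 hp he
      have hA2 : auxM m n F2 φ2 M2 i j = 0 := by
        refine auxM_eq_zero F2 φ2 M2 ?_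
        rintro ⟨q, hq, heq⟩
        exact hdisj p hp q hq (he.trans heq.symm)
      rw [hM12, hA1, hA2, add_zero]
      unfold Mval
      rw [dif_pos ⟨hpa, hpb⟩]
    · by_cases e2 : ∃ p ∈ F2, φ2 p = ((i : ℕ), (j : ℕ))
      · obtain ⟨p, hp, he⟩ := e2
        obtain ⟨hpa, hpb⟩ := hF2.1 p hp
        have hM12 : M12 i j = M2 ⟨p.1, hpa⟩ ⟨p.2, hpb⟩ := by
          refine h2 ⟨p.1, hpa⟩ ⟨p.2, hpb⟩ i j ?_ ?_
          · simpa [Prod.mk.eta] using hp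
          · simpa [Prod.mk.eta] using he
        have hA2 : auxM m n F2 φ2 M2 i j = Mval M2 p := auxM_eq_of F2 φ2 M2 hinj2 hp he
        have hA1 : auxM m n F1 φ1 M1 i j = 0 := auxM_eq_zero F1 φ1 M1 e1
        rw [hM12, hA1, hA2, zero_add]
        unfold Mval
        rw [dif_pos ⟨hpa, hpb⟩]
      · rw [h0 i j e1 e2, auxM_eq_zero F1 φ1 M1 e1, auxM_eq_zero F2 φ2 M2 e2, add_zero]
  rw [hkey]
  refine le_trans (matrix_rank_add_le _ _) ?_
  exact Nat.add_le_add
    (rank_auxM_le F1 hF1 φ1 hinj1 hsh1 M1 hM1)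
    (rank_auxM_le F2 hF2 φ2 hinj2 hsh2 M2 hM2)
end

section
/- Let F be an m×n Ferrers diagram, δ an integer with 0 < δ ≤ n, θ_i the number of dots on the i-th diagonal of F (i ∈ [m]), and θ_max = max_i θ_i. Then for every prime power q ≥ θ_max − 1 there exists an [F, k, δ]_q code with k = Σ_{i=0}^{m−1} max{0, θ_i − δ + 1}. -/
/-- The number of dots of `F` on the `i`-th diagonal (the cells `(i-j, n-1-j)`). -/
def diagDots (n : ℕ) (F : Finset (ℕ × ℕ)) (i : ℕ) : ℕ :=
  (F.filter (fun p => p.1 + (n - 1 - p.2) = i)).card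


open Polynomial Finset

section ReedSolomon

variable {K : Type*} [Field K]

/-- Evaluation on the projective line `Option K = K ∪ {∞}` of a polynomial of degree `< k`, read as
a binary form of degree `k - 1`: its value at `∞` is the coefficient of `X ^ (k - 1)`. -/
noncomputable def projectiveEval (k : ℕ) : K[X] →ₗ[K] (Option K → K) :=
  LinearMap.pi fun a => a.elim (lcoeff K (k - 1)) leval

theorem card_projectiveEval_eq_zero_lt [Fintype K] [DecidableEq K] {k : ℕ} {p : K[X]}
    (hp : p ∈ degreeLT K k) (hp0 : p ≠ 0) :
    #{a | projectiveEval k p a = 0} < k := by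
  have hroots : #{x : K | p.eval x = 0} ≤ p.natDegree :=
    card_le_degree_of_subset_roots fun x hx => by simp_all [mem_roots hp0]
  have hdeg := (natDegree_lt_iff_degree_lt hp0).mpr (mem_degreeLT.mp hp)
  rw [card_filter, Fintype.sum_option, ← card_filter]
  simp only [projectiveEval, LinearMap.pi_apply, Option.elim, lcoeff_apply, leval_apply]
  by_cases hc : p.coeff (k - 1) = 0
  · have : p.natDegree ≠ k - 1 := fun h =>
      hp0 (leadingCoeff_eq_zero.mp (by rwa [leadingCoeff, h]))
    simp only [hc, if_true]
    omega
  · simp only [hc, if_false]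
    omega

variable {ι : Type*} [Fintype ι]

theorem card_lt_hammingNorm_add_projectiveEval [Fintype K] [DecidableEq K]
    (e : ι ↪ Option K) {k : ℕ} {p : K[X]} (hp : p ∈ degreeLT K k) (hp0 : p ≠ 0) :
    Fintype.card ι < hammingNorm (fun i => projectiveEval k p (e i)) + k := by
  have hzeros : #{i | projectiveEval k p (e i) = 0} ≤ #{a | projectiveEval k p a = 0} :=
    card_le_card_of_injOn e (fun i hi => by simpa using hi) e.injective.injOn
  have hsplit := card_filter_add_card_filter_not (s := univ)
    (fun i : ι => projectiveEval k p (e i) = 0)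
  have := card_projectiveEval_eq_zero_lt hp hp0
  rw [card_univ] at hsplit
  simp only [hammingNorm, ne_eq]
  omega

noncomputable def reedSolomon (e : ι ↪ Option K) (k : ℕ) : Submodule K (ι → K) :=
  LinearMap.range (LinearMap.funLeft K K e ∘ₗ projectiveEval k ∘ₗ (degreeLT K k).subtype)

theorem card_lt_hammingNorm_add_of_mem_reedSolomon [Fintype K] [DecidableEq K]
    {e : ι ↪ Option K} {k : ℕ} {v : ι → K} (hv : v ∈ reedSolomon e k) (hv0 : v ≠ 0) :
    Fintype.card ι < hammingNorm v + k := by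
  obtain ⟨⟨p, hp⟩, rfl⟩ := hv
  refine card_lt_hammingNorm_add_projectiveEval e hp ?_
  rintro rfl
  exact hv0 (by simp)

theorem finrank_reedSolomon [Fintype K] (e : ι ↪ Option K) {k : ℕ} (hk : k ≤ Fintype.card ι) :
    Module.finrank K (reedSolomon e k) = k := by
  classical
  have hinj : Function.Injective
      (LinearMap.funLeft K K e ∘ₗ projectiveEval k ∘ₗ (degreeLT K k).subtype) := by
    rw [← LinearMap.ker_eq_bot, LinearMap.ker_eq_bot']
    rintro ⟨p, hp⟩ hv
    by_contra hp0
    have := card_lt_hammingNorm_add_projectiveEval e hp (by simpa using hp0)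
    have hzero : (fun i => projectiveEval k p (e i)) = 0 := hv
    rw [hzero, hammingNorm_zero] at this
    omega
  rw [reedSolomon, LinearMap.finrank_range_of_inj hinj, (degreeLTEquiv K k).finrank_eq,
    Module.finrank_fin_fun]

theorem exists_mds_code [Fintype K] [DecidableEq K] (hι : Fintype.card ι ≤ Fintype.card K + 1)
    {δ : ℕ} (hδ : 0 < δ) : ∃ V : Submodule K (ι → K),
      Module.finrank K V = Fintype.card ι + 1 - δ ∧ ∀ v ∈ V, v ≠ 0 → δ ≤ hammingNorm v := by
  obtain ⟨e⟩ := Function.Embedding.nonempty_of_card_le (hι.trans_eq (Fintype.card_option).symm)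
  refine ⟨reedSolomon e (Fintype.card ι + 1 - δ), finrank_reedSolomon e (by omega),
    fun v hv hv0 => ?_⟩
  have := card_lt_hammingNorm_add_of_mem_reedSolomon hv hv0
  have := hammingNorm_le_card_fintype (x := v)
  omega

end ReedSolomon

section GluedCode

variable {K ι κ : Type*} [Field K] {d : ι → κ}

def gluedCode (d : ι → κ) (V : ∀ j, Submodule K ({x // d x = j} → K)) :
    Submodule K (ι → K) :=
  ⨅ j, (V j).comap (LinearMap.funLeft K K Subtype.val)

variable {V : ∀ j, Submodule K ({x // d x = j} → K)}

theorem mem_gluedCode {w : ι → K} :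
    w ∈ gluedCode d V ↔ ∀ j, (fun y : {x // d x = j} => w y) ∈ V j := by
  simp [gluedCode, LinearMap.funLeft, Function.comp_def]

theorem finrank_gluedCode [Finite ι] [Fintype κ] :
    Module.finrank K (gluedCode d V) = ∑ j, Module.finrank K (V j) := by
  let restrict : gluedCode d V →ₗ[K] ∀ j, V j := LinearMap.pi fun j =>
    ((LinearMap.funLeft K K Subtype.val) ∘ₗ (gluedCode d V).subtype).codRestrict (V j)
      fun w => mem_gluedCode.mp w.2 j
  have hbij : Function.Bijective restrict := by
    constructor
    · rw [← LinearMap.ker_eq_bot, LinearMap.ker_eq_bot']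
      intro w hw
      ext x
      exact congrFun (congrArg Subtype.val (congrFun hw (d x))) ⟨x, rfl⟩
    · intro v
      have hfiber : ∀ j (y : {x // d x = j}),
          (v (d y) : {x // d x = d y} → K) ⟨y, rfl⟩ = (v j : {x // d x = j} → K) y := by
        rintro j ⟨x, rfl⟩
        rfl
      refine ⟨⟨fun x => (v (d x) : {y // d y = d x} → K) ⟨x, rfl⟩,
        mem_gluedCode.mpr fun j => ?_⟩, ?_⟩
      · convert (v j).2 using 1
        exact funext (hfiber j)
      · funext j
        ext y
        exact hfiber j y
  rw [(LinearEquiv.ofBijective restrict hbij).finrank_eq, Module.finrank_pi_fintype]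

end GluedCode

section Diagonals

variable {K : Type*} [Field K]

theorem Matrix.le_rank_of_isUpperTriangular_submatrix {m n : Type*} [Fintype n] {k : ℕ}
    (M : Matrix m n K) (r : Fin k → m) (c : Fin k → n)
    (htri : (M.submatrix r c).IsUpperTriangular) (hdiag : ∀ s, M (r s) (c s) ≠ 0) :
    k ≤ M.rank := by
  have hdet : (M.submatrix r c).det ≠ 0 := by
    rw [det_of_isUpperTriangular htri]
    exact prod_ne_zero_iff.mpr fun s _ => hdiag s
  calc k = (M.submatrix r c).rank := by
        rw [rank_of_isUnit _ ((isUnit_iff_isUnit_det _).mpr hdet.isUnit), Fintype.card_fin]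
    _ ≤ M.rank := rank_submatrix_le M r c

variable {m n : ℕ}

def diagIndex (p : Fin m × Fin n) : ℕ := p.1 + (n - 1 - p.2)

theorem Matrix.card_diagIndex_eq_ne_zero_le_rank [DecidableEq K] (M : Matrix (Fin m) (Fin n) K)
    (i : ℕ) (h : ∀ p : Fin m × Fin n, i < diagIndex p → M p.1 p.2 = 0) :
    #{p : Fin m × Fin n | diagIndex p = i ∧ M p.1 p.2 ≠ 0} ≤ M.rank := by
  set T := ({p : Fin m × Fin n | diagIndex p = i ∧ M p.1 p.2 ≠ 0} : Finset _)
  have hT : ∀ p ∈ T, diagIndex p = i ∧ M p.1 p.2 ≠ 0 := fun p hp => (mem_filter.mp hp).2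
  have hrow : #(T.image Prod.fst) = #T := by
    refine card_image_of_injOn fun p hp q hq hpq => Prod.ext hpq (Fin.ext ?_)
    have := (hT p hp).1; have := (hT q hq).1
    have := p.2.isLt; have := q.2.isLt
    simp only [diagIndex, Fin.val_eq_val, hpq] at *
    omega
  set r := (T.image Prod.fst).orderEmbOfFin hrow
  have hcell : ∀ s, ∃ p ∈ T, p.1 = r s := fun s =>
    mem_image.mp ((T.image Prod.fst).orderEmbOfFin_mem hrow s)
  choose cell hcellT hcellr using hcell
  refine M.le_rank_of_isUpperTriangular_submatrix r (fun s => (cell s).2) ?_ fun s => ?_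
  · intro s t hts
    have hlt : (r t : ℕ) < r s := r.strictMono hts
    have := (hT _ (hcellT t)).1
    have := (cell t).2.isLt
    refine h (r s, (cell t).2) ?_
    simp only [diagIndex, hcellr] at *
    omega
  · simpa [hcellr] using (hT _ (hcellT s)).2

/-- Cells of `F` on the diagonals `0, …, m - 1` are labelled by their diagonal; every other cell
gets `none`, where the code is `⊥`. -/
def diagLabel (F : Finset (ℕ × ℕ)) (p : Fin m × Fin n) : Option (Fin m) :=
  if h : ((p.1 : ℕ), (p.2 : ℕ)) ∈ F ∧ diagIndex p < m then some ⟨diagIndex p, h.2⟩ else none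

theorem diagLabel_eq_some_iff {F : Finset (ℕ × ℕ)} {p : Fin m × Fin n} {j : Fin m} :
    diagLabel F p = some j ↔ ((p.1 : ℕ), (p.2 : ℕ)) ∈ F ∧ diagIndex p = j := by
  unfold diagLabel
  split_ifs with h
  · simp [Fin.ext_iff, h.1, eq_comm]
  · simp only [false_iff, not_and]
    exact fun hF hj => h ⟨hF, hj ▸ j.2⟩

theorem card_diagLabel_eq_some {F : Finset (ℕ × ℕ)} (hF : ∀ p ∈ F, p.1 < m ∧ p.2 < n)
    (j : Fin m) : Fintype.card {p : Fin m × Fin n // diagLabel F p = some j} = diagDots n F j := by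
  rw [Fintype.card_subtype, diagDots]
  refine card_bij (fun p _ => ((p.1 : ℕ), (p.2 : ℕ))) (fun p hp => ?_) ?_ fun q hq => ?_
  · simpa [diagLabel_eq_some_iff, diagIndex] using hp
  · intro p _ q _ hpq
    simp only [Prod.mk.injEq, Fin.val_eq_val] at hpq
    exact Prod.ext hpq.1 hpq.2
  · obtain ⟨hqF, hqj⟩ := mem_filter.mp hq
    obtain ⟨hq1, hq2⟩ := hF q hqF
    refine ⟨(⟨q.1, hq1⟩, ⟨q.2, hq2⟩), ?_, rfl⟩
    simpa [diagLabel_eq_some_iff, diagIndex] using ⟨hqF, hqj⟩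

theorem Matrix.le_rank_of_uncurry_mem_gluedCode [DecidableEq K]
    {d : Fin m × Fin n → Option (Fin m)} (hd : ∀ p j, d p = some j → diagIndex p = j)
    {W : ∀ o, Submodule K ({p // d p = o} → K)}
    (hnone : W none = ⊥) {δ : ℕ} (hW : ∀ j, ∀ v ∈ W (some j), v ≠ 0 → δ ≤ hammingNorm v)
    {M : Matrix (Fin m) (Fin n) K} (hM : (fun p => M p.1 p.2) ∈ gluedCode d W) (hM0 : M ≠ 0) :
    δ ≤ M.rank := by
  have hS : ({p | M p.1 p.2 ≠ 0} : Finset (Fin m × Fin n)).Nonempty := by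
    obtain ⟨p, hp⟩ : ∃ p : Fin m × Fin n, M p.1 p.2 ≠ 0 := by
      by_contra! h
      exact hM0 (Matrix.ext fun r c => h (r, c))
    exact ⟨p, mem_filter.mpr ⟨mem_univ p, hp⟩⟩
  obtain ⟨p₀, hp₀S, hmax⟩ := exists_max_image _ diagIndex hS
  have hp₀ : M p₀.1 p₀.2 ≠ 0 := (mem_filter.mp hp₀S).2
  obtain ⟨j, hj⟩ : ∃ j, d p₀ = some j := by
    refine Option.ne_none_iff_exists'.mp fun hp₀none => hp₀ ?_
    have := mem_gluedCode.mp hM none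
    rw [hnone, Submodule.mem_bot] at this
    exact congrFun this ⟨p₀, hp₀none⟩
  set v : {p // d p = some j} → K := fun y => M y.1.1 y.1.2
  have hv0 : v ≠ 0 := fun hv => hp₀ (congrFun hv ⟨p₀, hj⟩)
  calc δ ≤ hammingNorm v := hW j v (mem_gluedCode.mp hM (some j)) hv0
    _ ≤ #{p : Fin m × Fin n | diagIndex p = j ∧ M p.1 p.2 ≠ 0} :=
      card_le_card_of_injOn Subtype.val
        (fun y hy => by simpa [hd _ _ y.2] using (mem_filter.mp hy).2) Subtype.val_injective.injOn
    _ ≤ M.rank := M.card_diagIndex_eq_ne_zero_le_rank j fun p hp => by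
      by_contra hp'
      have := hmax p (mem_filter.mpr ⟨mem_univ _, hp'⟩)
      rw [hd _ _ hj] at this
      omega

end Diagonals

theorem stmt16_general (Fq : Type*) [Field Fq] [Fintype Fq]
    (m n δ : ℕ) (hδ1 : 0 < δ)
    (F : Finset (ℕ × ℕ)) (hF : IsFerrersDiagram m n F)
    (hq : (Finset.range m).sup (diagDots n F) - 1 ≤ Fintype.card Fq) :
    ∃ C : Submodule Fq (Matrix (Fin m) (Fin n) Fq),
      (∀ M ∈ C, ∀ (i : Fin m) (j : Fin n), ((i : ℕ), (j : ℕ)) ∉ F → M i j = 0) ∧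
      Module.finrank Fq C = ∑ i ∈ Finset.range m, (diagDots n F i + 1 - δ) ∧
      (∀ M ∈ C, M ≠ 0 → δ ≤ M.rank) := by
  classical
  have hcard : ∀ j : Fin m,
      Fintype.card {p // diagLabel F p = some j} ≤ Fintype.card Fq + 1 := fun j => by
    have := le_sup (f := diagDots n F) (mem_range.mpr j.2)
    rw [card_diagLabel_eq_some hF.1]
    omega
  choose V hVdim hVwt using fun j => exists_mds_code (hcard j) hδ1
  let W : ∀ o, Submodule Fq ({p // diagLabel F p = o} → Fq) := fun o => o.rec ⊥ V
  let e : Matrix (Fin m) (Fin n) Fq ≃ₗ[Fq] (Fin m × Fin n → Fq) :=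
    (Matrix.ofLinearEquiv Fq).symm ≪≫ₗ (LinearEquiv.curry Fq Fq _ _).symm
  refine ⟨(gluedCode (diagLabel F) W).comap e.toLinearMap, fun M hM i j hij => ?_, ?_,
    fun M hM hM0 => ?_⟩
  · have hlabel : diagLabel F (i, j) = none := by
      rw [Option.eq_none_iff_forall_ne_some]
      exact fun k hk => hij (diagLabel_eq_some_iff.mp hk).1
    have := mem_gluedCode.mp hM none
    rw [Submodule.mem_bot] at this
    exact congrFun this ⟨(i, j), hlabel⟩
  · rw [Submodule.comap_equiv_eq_map_symm, LinearEquiv.finrank_map_eq, finrank_gluedCode,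
      Fintype.sum_option]
    simp only [W, finrank_bot, zero_add, hVdim, card_diagLabel_eq_some hF.1]
    exact Fin.sum_univ_eq_sum_range (fun i => diagDots n F i + 1 - δ) m
  · exact Matrix.le_rank_of_uncurry_mem_gluedCode (fun _ _ h => (diagLabel_eq_some_iff.mp h).2)
      rfl hVwt hM hM0

/-- Theorem 2.3 of the paper (Construction 1): for an `m×n` Ferrers diagram `F`,
`0 < δ ≤ n`, and any prime power `q ≥ θ_max - 1`, there is an `[F, k, δ]_q` code
with `k = Σ_{i=0}^{m-1} max{0, θ_i - δ + 1}`. -/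
theorem stmt16 (Fq : Type*) [Field Fq] [Fintype Fq]
    (m n δ : ℕ) (hδ1 : 0 < δ) (hδn : δ ≤ n)
    (F : Finset (ℕ × ℕ)) (hF : IsFerrersDiagram m n F)
    (hq : (Finset.range m).sup (diagDots n F) - 1 ≤ Fintype.card Fq) :
    ∃ C : Submodule Fq (Matrix (Fin m) (Fin n) Fq),
      (∀ M ∈ C, ∀ (i : Fin m) (j : Fin n), ((i : ℕ), (j : ℕ)) ∉ F → M i j = 0) ∧
      Module.finrank Fq C = ∑ i ∈ Finset.range m, (diagDots n F i + 1 - δ) ∧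
      (∀ M ∈ C, M ≠ 0 → δ ≤ M.rank) :=
  stmt16_general Fq m n δ hδ1 F hF hq
end

section
/- Let M ∈ F_q^{m×n} be a matrix, and for each i let the diagonal D_i be the set of cells (i−j, n−1−j) for varying j. If the restriction of M to some diagonal D_i is a nonzero vector of Hamming weight w and all diagonals D_{i'} with i' < i restrict to zero, then rank(M) ≥ w. -/
/-- If the restriction of `M` to the `i₀`-th diagonal (cells `(i,j)` with
`i + (n-1-j) = i₀`) is nonzero with Hamming weight `w`, while all earlier
diagonals (`i' < i₀`) restrict to zero, then `rank(M) ≥ w`. -/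
theorem stmt17 (K : Type*) [Field K] [DecidableEq K] (m n : ℕ)
    (M : Matrix (Fin m) (Fin n) K) (i0 : ℕ)
    (hzero : ∀ (i : Fin m) (j : Fin n), (i : ℕ) + (n - 1 - (j : ℕ)) < i0 → M i j = 0)
    (hnz : ∃ (i : Fin m) (j : Fin n), (i : ℕ) + (n - 1 - (j : ℕ)) = i0 ∧ M i j ≠ 0) :
    (Finset.univ.filter (fun p : Fin m × Fin n =>
        (p.1 : ℕ) + (n - 1 - (p.2 : ℕ)) = i0 ∧ M p.1 p.2 ≠ 0)).card ≤ M.rank := by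
  classical
  set S : Finset (Fin m × Fin n) := Finset.univ.filter (fun p : Fin m × Fin n =>
      (p.1 : ℕ) + (n - 1 - (p.2 : ℕ)) = i0 ∧ M p.1 p.2 ≠ 0) with hS
  have hmemS : ∀ p : Fin m × Fin n, p ∈ S ↔
      (p.1 : ℕ) + (n - 1 - (p.2 : ℕ)) = i0 ∧ M p.1 p.2 ≠ 0 := by
    intro p; simp [hS]
  -- the second-coordinate map is injective on S
  have hsndinj : Set.InjOn Prod.snd (S : Set (Fin m × Fin n)) := by
    intro p hp q hq hpq
    rw [Finset.mem_coe, hmemS] at hp hq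
    have h1 := hp.1
    have h2 := hq.1
    have : (p.1 : ℕ) = q.1 := by rw [hpq] at h1; omega
    exact Prod.ext (Fin.ext this) hpq
  set t : Finset (Fin n) := S.image Prod.snd with ht
  have hcard : t.card = S.card := Finset.card_image_of_injOn hsndinj
  set w : ℕ := t.card with hw
  have hwS : S.card = w := hcard.symm
  -- column selection
  set c : Fin w → Fin n := ⇑(t.orderEmbOfFin hw.symm) with hc
  have hcmem : ∀ l, c l ∈ t := fun l => Finset.orderEmbOfFin_mem t rfl l
  have hcmono : StrictMono c := (t.orderEmbOfFin hw.symm).strictMono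
  -- row selection
  have hex : ∀ l : Fin w, ∃ i : Fin m, (i, c l) ∈ S := by
    intro l
    obtain ⟨p, hp, hps⟩ := Finset.mem_image.mp (hcmem l)
    exact ⟨p.1, by rwa [← hps, Prod.mk.eta]⟩
  choose r hr using hex
  have hrc : ∀ l, (r l : ℕ) + (n - 1 - (c l : ℕ)) = i0 ∧ M (r l) (c l) ≠ 0 :=
    fun l => (hmemS _).mp (hr l)
  -- the square submatrix
  set B : Matrix (Fin w) (Fin w) K := M.submatrix r c with hB
  -- B is lower triangular with nonzero diagonal
  have htri : ∀ k l : Fin w, k < l → B k l = 0 := by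
    intro k l hkl
    have hlt : (c k : ℕ) < (c l : ℕ) := hcmono hkl
    have hn : (c l : ℕ) < n := (c l).isLt
    have := (hrc k).1
    apply hzero
    omega
  have hdet : B.det ≠ 0 := by
    have : B.BlockTriangular OrderDual.toDual := by
      intro k l h
      exact htri k l (OrderDual.toDual_lt_toDual.mp h)
    rw [Matrix.det_of_lowerTriangular B this]
    exact Finset.prod_ne_zero_iff.mpr (fun l _ => (hrc l).2)
  -- express B as a product to bound rank
  have hfac : B = (((1 : Matrix (Fin m) (Fin m) K).submatrix r id) * M) *
      ((1 : Matrix (Fin n) (Fin n) K).submatrix id c) := by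
    ext k l
    simp [hB, Matrix.mul_apply, Matrix.one_apply, Finset.sum_ite_eq,
      Finset.sum_ite_eq', Matrix.submatrix_apply]
  have hrankB : B.rank = w := by
    rw [Matrix.rank_of_isUnit B ((Matrix.isUnit_iff_isUnit_det B).mpr (Ne.isUnit hdet))]
    simp
  have h1 : B.rank ≤ (((1 : Matrix (Fin m) (Fin m) K).submatrix r id) * M).rank := by
    rw [hfac]; exact Matrix.rank_mul_le_left _ _
  have h2 : (((1 : Matrix (Fin m) (Fin m) K).submatrix r id) * M).rank ≤ M.rank :=
    Matrix.rank_mul_le_right _ _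
  calc S.card = w := hwS
    _ = B.rank := hrankB.symm
    _ ≤ M.rank := h1.trans h2
end

section
/- Let q be a prime power, m ≥ 2n−2, n ≤ q+2, and β a generator of a polynomial basis (1, β, ..., β^{m−1}) of F_{q^m} over F_q. Let a_1, ..., a_{n−3} be distinct nonzero elements of F_q. Then the 2×n matrix G over F_{q^m} with rows (1, 0, β^2, β^3, ..., β^{n−2}, β^n) and (0, 1, a_1β, a_2β^2, ..., a_{n−3}β^{n−3}, β^{n−2}) generates a systematic MRD code: every nonzero F_{q^m}-linear combination of the rows, expanded to an m×n matrix over F_q, has rank at least n−1. -/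
theorem rank_expand_s18 {Fq L : Type*} [Field Fq] [Field L] [Algebra Fq L] {m n : ℕ}
    (b : Module.Basis (Fin m) Fq L) (v : Fin n → L) :
    (expand b v).rank = Module.finrank Fq (Submodule.span Fq (Set.range v)) := by
  have hcol : (expand b v).col = (b.equivFun : L →ₗ[Fq] Fin m → Fq) ∘ v := rfl
  rw [Matrix.rank_eq_finrank_span_cols, hcol, Set.range_comp, Submodule.span_image,
    LinearEquiv.finrank_map_eq]

theorem Submodule.finrank_le_one_of_forall_exists_eq_smul {K V : Type*} [DivisionRing K]
    [AddCommGroup V] [Module K V] (S : Submodule K V)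
    (h : ∀ x ∈ S, ∀ y ∈ S, x ≠ 0 → ∃ t : K, y = t • x) : Module.finrank K S ≤ 1 := by
  by_cases hS : S = ⊥
  · rw [hS, finrank_bot]; exact zero_le_one
  obtain ⟨x, hx, hx0⟩ := (Submodule.ne_bot_iff S).mp hS
  refine finrank_le_one ⟨x, hx⟩ fun y => ?_
  obtain ⟨t, ht⟩ := h x hx y y.2 hx0
  exact ⟨t, Subtype.ext ht.symm⟩

theorem mul_eq_mul_of_combination_eq_zero {K : Type*} [Field K] {u : Fin 2 → K} (hu : u ≠ 0)
    {p q p' q' : K} (h : u 0 * p + u 1 * q = 0) (h' : u 0 * p' + u 1 * q' = 0) :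
    p * q' = p' * q := by
  have h0 : u 0 * (p * q' - p' * q) = 0 := by linear_combination q' * h - q * h'
  have h1 : u 1 * (p * q' - p' * q) = 0 := by linear_combination p * h' - p' * h
  by_contra hne
  have hne' := sub_ne_zero.mpr hne
  exact hu (funext fun i => by
    fin_cases i
    exacts [(mul_eq_zero.mp h0).resolve_right hne', (mul_eq_zero.mp h1).resolve_right hne'])

section Polynomials

open Polynomial

variable {F : Type*} [Field F]

/-- A relation `x` is encoded by `columnCombination n a x = (A, B)`, the two rows of `G` with `β`
replaced by `X`, combined with weights `x`; these are the linear conditions on coefficients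
shared by all such pairs. -/
def admissiblePairs (n : ℕ) (a : ℕ → F) : Submodule F (F[X] × F[X]) where
  carrier := {P | (∀ k, n < k → P.1.coeff k = 0) ∧ P.1.coeff 1 = 0 ∧ P.1.coeff (n - 1) = 0 ∧
    (∀ k, n - 2 < k → P.2.coeff k = 0) ∧
    (∀ k, 1 ≤ k → k ≤ n - 3 → P.2.coeff k = a k * P.1.coeff (k + 1)) ∧
    P.2.coeff (n - 2) = P.1.coeff n}
  add_mem' := by
    rintro P Q ⟨hP1, hP2, hP3, hP4, hP5, hP6⟩ ⟨hQ1, hQ2, hQ3, hQ4, hQ5, hQ6⟩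
    refine ⟨fun k hk => ?_, ?_, ?_, fun k hk => ?_, fun k hk hk' => ?_, ?_⟩ <;>
      simp [*, mul_add]
  zero_mem' := by simp
  smul_mem' := by
    rintro t P ⟨hP1, hP2, hP3, hP4, hP5, hP6⟩
    refine ⟨fun k hk => ?_, ?_, ?_, fun k hk => ?_, fun k hk hk' => ?_, ?_⟩ <;>
      simp [*, mul_left_comm]

namespace admissiblePairs

variable {n : ℕ} {a : ℕ → F} {P P' : F[X] × F[X]}

theorem natDegree_fst_le (hP : P ∈ admissiblePairs n a) : P.1.natDegree ≤ n :=
  natDegree_le_iff_coeff_eq_zero.mpr hP.1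

/-- With truncated subtraction, this also says that `B` is constant whenever `A` is. -/
theorem natDegree_snd_le (hP : P ∈ admissiblePairs n a) : P.2.natDegree ≤ P.1.natDegree - 1 := by
  obtain ⟨hA, -, -, hB, hmid, htop⟩ := hP
  refine natDegree_le_iff_coeff_eq_zero.mpr fun k hk => ?_
  rcases (by omega : n - 2 < k ∨ k = n - 2 ∨ k ≤ n - 3) with h | h | h
  · exact hB k h
  · rw [h, htop, coeff_eq_zero_of_natDegree_lt (by omega)]
  · rw [hmid k (by omega) h, coeff_eq_zero_of_natDegree_lt (by omega), mul_zero]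

theorem natDegree_fst_cases (ha0 : ∀ i, 1 ≤ i → i ≤ n - 3 → a i ≠ 0)
    (hP : P ∈ admissiblePairs n a) (hA : P.1 ≠ 0) :
    P.1.natDegree = 0 ∨
      (2 ≤ P.1.natDegree ∧ P.1.natDegree ≤ n - 2 ∧ P.2.natDegree + 1 = P.1.natDegree ∧
        P.2.leadingCoeff = a (P.1.natDegree - 1) * P.1.leadingCoeff) ∨
      (P.1.natDegree = n ∧ P.2.natDegree + 2 = n ∧ P.2.leadingCoeff = P.1.leadingCoeff) := by
  have hv := natDegree_snd_le hP
  have hun := natDegree_fst_le hP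
  obtain ⟨-, h1, hn1, hB, hmid, htop⟩ := hP
  set u := P.1.natDegree
  have hlc : P.1.coeff u ≠ 0 := leadingCoeff_ne_zero.mpr hA
  have hu1 : u ≠ 1 := fun h => hlc (h ▸ h1)
  have hun1 : u ≠ n - 1 := fun h => hlc (h ▸ hn1)
  have hvB : ∀ k, P.2.coeff k ≠ 0 → k ≤ P.2.natDegree := fun k => le_natDegree_of_ne_zero
  rcases (by omega : u = 0 ∨ (2 ≤ u ∧ u ≤ n - 2) ∨ u = n) with h0 | hu | hu
  · exact Or.inl h0
  · have hBu : P.2.coeff (u - 1) = a (u - 1) * P.1.leadingCoeff := by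
      rw [hmid _ (by omega) (by omega), Nat.sub_add_cancel (by omega)]; rfl
    have hne := hvB _ (by
      rw [hBu]; exact mul_ne_zero (ha0 _ (by omega) (by omega)) (leadingCoeff_ne_zero.mpr hA))
    refine Or.inr (Or.inl ⟨hu.1, hu.2, by omega, ?_⟩)
    rw [leadingCoeff, ← hBu]; congr 1; omega
  · have hBn : P.2.coeff (n - 2) = P.1.leadingCoeff := by rw [htop, ← hu]; rfl
    have hne := hvB _ (by rw [hBn]; exact leadingCoeff_ne_zero.mpr hA)
    have hvn : P.2.natDegree ≤ n - 2 := natDegree_le_iff_coeff_eq_zero.mpr hB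
    refine Or.inr (Or.inr ⟨hu, by omega, ?_⟩)
    rw [leadingCoeff, ← hBn]; congr 1; omega

theorem natDegree_fst_eq_zero_of_snd_eq_zero (ha0 : ∀ i, 1 ≤ i → i ≤ n - 3 → a i ≠ 0)
    (hP : P ∈ admissiblePairs n a) (hB : P.2 = 0) : P.1.natDegree = 0 := by
  by_cases hA : P.1 = 0
  · rw [hA, natDegree_zero]
  have hlc := leadingCoeff_ne_zero.mpr hA
  rcases natDegree_fst_cases ha0 hP hA with h | ⟨h2, hn2, -, hl⟩ | ⟨-, -, hl⟩
  · exact h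
  · rw [hB, leadingCoeff_zero] at hl
    exact absurd hl.symm (mul_ne_zero (ha0 _ (by omega) (by omega)) hlc)
  · rw [hB, leadingCoeff_zero] at hl
    exact absurd hl.symm hlc

theorem natDegree_fst_eq_of_mul_eq (ha0 : ∀ i, 1 ≤ i → i ≤ n - 3 → a i ≠ 0)
    (hainj : ∀ i j, 1 ≤ i → i ≤ n - 3 → 1 ≤ j → j ≤ n - 3 → a i = a j → i = j)
    (hP : P ∈ admissiblePairs n a) (hP' : P' ∈ admissiblePairs n a)
    (hA : P.1 ≠ 0) (hA' : P'.1 ≠ 0) (hrel : P.1 * P'.2 = P'.1 * P.2) :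
    P.1.natDegree = P'.1.natDegree := by
  by_cases hB : P.2 = 0
  · have hB' : P'.2 = 0 := by simpa [hB, hA] using hrel
    rw [natDegree_fst_eq_zero_of_snd_eq_zero ha0 hP hB,
      natDegree_fst_eq_zero_of_snd_eq_zero ha0 hP' hB']
  have hB' : P'.2 ≠ 0 := fun h => by simp [h, hA', hB] at hrel
  have hdeg := congrArg natDegree hrel
  rw [natDegree_mul hA hB', natDegree_mul hA' hB] at hdeg
  have hlc := congrArg leadingCoeff hrel
  rw [leadingCoeff_mul, leadingCoeff_mul] at hlc
  have hv := natDegree_snd_le hP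
  have hv' := natDegree_snd_le hP'
  rcases natDegree_fst_cases ha0 hP hA with h | ⟨h2, hn2, hvu, hl⟩ | ⟨hu, hvu⟩ <;>
    rcases natDegree_fst_cases ha0 hP' hA' with h' | ⟨h2', hn2', hvu', hl'⟩ | ⟨hu', hvu'⟩ <;>
    try omega
  rw [hl, hl'] at hlc
  have ha : a (P'.1.natDegree - 1) = a (P.1.natDegree - 1) :=
    mul_right_cancel₀ (mul_ne_zero (leadingCoeff_ne_zero.mpr hA) (leadingCoeff_ne_zero.mpr hA'))
      (by linear_combination hlc)
  have := hainj _ _ (by omega) (by omega) (by omega) (by omega) ha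
  omega

theorem exists_eq_smul_of_mul_eq (ha0 : ∀ i, 1 ≤ i → i ≤ n - 3 → a i ≠ 0)
    (hainj : ∀ i j, 1 ≤ i → i ≤ n - 3 → 1 ≤ j → j ≤ n - 3 → a i = a j → i = j)
    (hP : P ∈ admissiblePairs n a) (hP' : P' ∈ admissiblePairs n a) (hne : P ≠ 0)
    (hrel : P.1 * P'.2 = P'.1 * P.2) : ∃ t : F, P' = t • P := by
  by_cases hA : P.1 = 0
  · have hB : P.2 ≠ 0 := fun hB => hne (Prod.ext hA hB)
    have hA' : P'.1 = 0 := by simpa [hA, hB] using hrel.symm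
    obtain ⟨c, hc⟩ : ∃ c, P.2 = C c :=
      ⟨_, eq_C_of_natDegree_eq_zero (by simpa [hA] using natDegree_snd_le hP)⟩
    obtain ⟨c', hc'⟩ : ∃ c', P'.2 = C c' :=
      ⟨_, eq_C_of_natDegree_eq_zero (by simpa [hA'] using natDegree_snd_le hP')⟩
    have h0 : c ≠ 0 := by rintro rfl; exact hB (by rw [hc, C_0])
    refine ⟨c' / c, Prod.ext (by simp [hA, hA']) ?_⟩
    rw [Prod.smul_snd, hc', hc, smul_C, smul_eq_mul, div_mul_cancel₀ _ h0]
  set t := P'.1.coeff P.1.natDegree / P.1.leadingCoeff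
  refine ⟨t, sub_eq_zero.mp ?_⟩
  set Q := P' - t • P
  have hQ : Q ∈ admissiblePairs n a := sub_mem hP' (Submodule.smul_mem _ t hP)
  have hrelQ : P.1 * Q.2 = Q.1 * P.2 := by
    simp only [Q, Prod.fst_sub, Prod.snd_sub, Prod.smul_fst, Prod.smul_snd, smul_eq_C_mul]
    linear_combination hrel
  have hQ1 : Q.1.coeff P.1.natDegree = 0 := by
    simp [Q, t, div_mul_cancel₀ _ (leadingCoeff_ne_zero.mpr hA)]
  by_contra hQ0
  have hQA : Q.1 ≠ 0 := fun h => hQ0 (Prod.ext h (by simpa [h, hA] using hrelQ))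
  have hdeg := natDegree_fst_eq_of_mul_eq ha0 hainj hP hQ hA hQA hrelQ
  exact hQA (leadingCoeff_eq_zero.mp (by rw [leadingCoeff, ← hdeg, hQ1]))

theorem degree_mul_sub_mul_lt (hP : P ∈ admissiblePairs n a) (hP' : P' ∈ admissiblePairs n a) :
    (P.1 * P'.2 - P'.1 * P.2).degree < ↑(n + (n - 2)) := by
  have hvn : ∀ {Q : F[X] × F[X]}, Q ∈ admissiblePairs n a → Q.2.natDegree ≤ n - 2 :=
    fun hQ => natDegree_le_iff_coeff_eq_zero.mpr hQ.2.2.2.1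
  refine (degree_lt_iff_coeff_zero _ _).mpr fun k hk => ?_
  rcases hk.eq_or_lt with rfl | hk
  · rw [coeff_sub, coeff_mul_add_eq_of_natDegree_le (natDegree_fst_le hP) (hvn hP'),
      coeff_mul_add_eq_of_natDegree_le (natDegree_fst_le hP') (hvn hP), hP.2.2.2.2.2,
      hP'.2.2.2.2.2, mul_comm, sub_self]
  · have hlt : ∀ {Q Q' : F[X] × F[X]}, Q ∈ admissiblePairs n a → Q' ∈ admissiblePairs n a →
        (Q.1 * Q'.2).natDegree < k := fun hQ hQ' =>
      (natDegree_mul_le.trans (add_le_add (natDegree_fst_le hQ) (hvn hQ'))).trans_lt hk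
    rw [coeff_sub, coeff_eq_zero_of_natDegree_lt (hlt hP hP'),
      coeff_eq_zero_of_natDegree_lt (hlt hP' hP), sub_zero]

theorem mul_eq_mul_of_aeval_eq {L : Type*} [Field L] [Algebra F L] (pb : PowerBasis F L)
    (hdim : n + (n - 2) ≤ pb.dim) (hP : P ∈ admissiblePairs n a)
    (hP' : P' ∈ admissiblePairs n a)
    (h : aeval pb.gen (P.1 * P'.2) = aeval pb.gen (P'.1 * P.2)) :
    P.1 * P'.2 = P'.1 * P.2 := by
  by_contra hne
  have hroot := pb.dim_le_degree_of_root (sub_ne_zero.mpr hne) (by rw [map_sub, h, sub_self])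
  have := (degree_mul_sub_mul_lt hP hP').trans_le' hroot
  exact absurd this (not_lt.mpr (WithBot.coe_le_coe.mpr hdim))

end admissiblePairs

noncomputable def columnPolys (n : ℕ) (a : ℕ → F) (j : ℕ) : F[X] × F[X] :=
  if j = 0 then (1, 0) else if j = 1 then (0, 1)
  else if j = n - 1 then (X ^ n, X ^ (n - 2)) else (X ^ j, C (a (j - 1)) * X ^ (j - 1))

theorem columnPolys_mem {n : ℕ} (hn : 3 ≤ n) (a : ℕ → F) {j : ℕ} (hj : j < n) :
    columnPolys n a j ∈ admissiblePairs n a := by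
  unfold columnPolys
  split_ifs <;>
    refine ⟨fun k hk => ?_, ?_, ?_, fun k hk => ?_, fun k hk hk' => ?_, ?_⟩ <;>
    simp [coeff_X_pow, coeff_one] <;> (try split_ifs) <;> first | rfl | omega | (congr 1; omega)

noncomputable def pivotCoeff (n i : ℕ) : F[X] × F[X] →ₗ[F] F :=
  if i = 1 then (lcoeff F 0).comp (LinearMap.snd F _ _)
  else (lcoeff F (if i = n - 1 then n else i)).comp (LinearMap.fst F _ _)

theorem pivotCoeff_columnPolys {n : ℕ} (hn : 3 ≤ n) (a : ℕ → F) {i j : ℕ} (hi : i < n)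
    (hj : j < n) : pivotCoeff n i (columnPolys n a j) = if i = j then 1 else 0 := by
  unfold pivotCoeff columnPolys
  split_ifs <;> simp [coeff_X_pow, coeff_one, coeff_C] <;> omega

noncomputable def columnCombination (n : ℕ) (a : ℕ → F) : (Fin n → F) →ₗ[F] F[X] × F[X] :=
  Fintype.linearCombination F fun j : Fin n => columnPolys n a j

theorem columnCombination_mem {n : ℕ} (hn : 3 ≤ n) (a : ℕ → F) (x : Fin n → F) :
    columnCombination n a x ∈ admissiblePairs n a := by
  rw [columnCombination, Fintype.linearCombination_apply]
  exact Submodule.sum_mem _ fun j _ => Submodule.smul_mem _ _ (columnPolys_mem hn a j.isLt)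

theorem pivotCoeff_columnCombination {n : ℕ} (hn : 3 ≤ n) (a : ℕ → F) (x : Fin n → F)
    (i : Fin n) : pivotCoeff n i (columnCombination n a x) = x i := by
  simp [columnCombination, Fintype.linearCombination_apply,
    pivotCoeff_columnPolys hn a i.isLt (Fin.is_lt _), Fin.val_inj]

theorem columnCombination_injective {n : ℕ} (hn : 3 ≤ n) (a : ℕ → F) :
    Function.Injective (columnCombination n a) := fun x y h => funext fun i => by
  rw [← pivotCoeff_columnCombination hn a x i, h, pivotCoeff_columnCombination hn a y i]

section Evaluation

variable {L : Type*} [Field L] [Algebra F L]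

theorem aeval_columnPolys_fst (n : ℕ) (a : ℕ → F) (β : L) (j : ℕ) :
    aeval β (columnPolys n a j).1 =
      if j = 0 then 1 else if j = 1 then 0 else if j = n - 1 then β ^ n else β ^ j := by
  unfold columnPolys; split_ifs <;> simp

theorem aeval_columnPolys_snd (n : ℕ) (a : ℕ → F) (β : L) (j : ℕ) :
    aeval β (columnPolys n a j).2 =
      if j = 0 then 0 else if j = 1 then 1 else if j = n - 1 then β ^ (n - 2)
      else algebraMap F L (a (j - 1)) * β ^ (j - 1) := by
  unfold columnPolys; split_ifs <;> simp

theorem linearCombination_vecMul_eq {ι : Type*} [Fintype ι] (β : L) (G : Matrix (Fin 2) ι L)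
    (p : ι → F[X] × F[X]) (h0 : ∀ j, G 0 j = aeval β (p j).1)
    (h1 : ∀ j, G 1 j = aeval β (p j).2)
    (u : Fin 2 → L) (x : ι → F) :
    Fintype.linearCombination F (Matrix.vecMul u G) x =
      u 0 * aeval β (Fintype.linearCombination F p x).1 +
        u 1 * aeval β (Fintype.linearCombination F p x).2 := by
  simp only [Fintype.linearCombination_apply, Prod.fst_sum, Prod.snd_sum, Prod.smul_fst,
    Prod.smul_snd, map_sum, map_smul, Finset.mul_sum, ← Finset.sum_add_distrib]
  refine Finset.sum_congr rfl fun j _ => ?_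
  rw [Matrix.vecMul, dotProduct, Fin.sum_univ_two, h0, h1, smul_add, mul_smul_comm, mul_smul_comm]

end Evaluation

end Polynomials

theorem stmt18_general (Fq L : Type*) [Field Fq] [Field L] [Algebra Fq L]
    (m n : ℕ) (hn : 3 ≤ n) (hm : 2 * n - 2 ≤ m)
    (β : L) (b : Module.Basis (Fin m) Fq L) (hb : ∀ i : Fin m, b i = β ^ (i : ℕ))
    (a : ℕ → Fq)
    (ha0 : ∀ i, 1 ≤ i → i ≤ n - 3 → a i ≠ 0)
    (hainj : ∀ i j, 1 ≤ i → i ≤ n - 3 → 1 ≤ j → j ≤ n - 3 → a i = a j → i = j)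
    (G : Matrix (Fin 2) (Fin n) L)
    (hG : ∀ (i : Fin 2) (j : Fin n), G i j =
      if (i : ℕ) = 0 then
        (if (j : ℕ) = 0 then 1 else if (j : ℕ) = 1 then 0
         else if (j : ℕ) = n - 1 then β ^ n else β ^ (j : ℕ))
      else
        (if (j : ℕ) = 0 then 0 else if (j : ℕ) = 1 then 1
         else if (j : ℕ) = n - 1 then β ^ (n - 2)
         else algebraMap Fq L (a ((j : ℕ) - 1)) * β ^ ((j : ℕ) - 1))) :
    ∀ u : Fin 2 → L, u ≠ 0 →
      n - 1 ≤ (expand b (Matrix.vecMul u G)).rank := by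
  intro u hu
  let pb : PowerBasis Fq L := ⟨β, m, b, hb⟩
  set ψ := Fintype.linearCombination Fq (Matrix.vecMul u G)
  set Φ := columnCombination n a
  have hψ : ∀ x, ψ x = u 0 * Polynomial.aeval β (Φ x).1 + u 1 * Polynomial.aeval β (Φ x).2 :=
    linearCombination_vecMul_eq β G _ (fun j => by rw [hG, aeval_columnPolys_fst]; rfl)
      (fun j => by rw [hG, aeval_columnPolys_snd]; rfl) u
  have hker : Module.finrank Fq (LinearMap.ker ψ) ≤ 1 := by
    refine (LinearMap.ker ψ).finrank_le_one_of_forall_exists_eq_smul fun x hx y hy hx0 => ?_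
    have hP := columnCombination_mem hn a x
    have hP' := columnCombination_mem hn a y
    have hrel := admissiblePairs.mul_eq_mul_of_aeval_eq pb (show n + (n - 2) ≤ m by omega)
      hP hP' (by
        simp only [map_mul]
        exact mul_eq_mul_of_combination_eq_zero hu ((hψ x).symm.trans hx) ((hψ y).symm.trans hy))
    obtain ⟨t, ht⟩ := admissiblePairs.exists_eq_smul_of_mul_eq ha0 hainj hP hP'
      ((map_ne_zero_iff Φ (columnCombination_injective hn a)).mpr hx0) hrel
    exact ⟨t, columnCombination_injective hn a (by rw [map_smul, ht])⟩
  have hrn := ψ.finrank_range_add_finrank_ker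
  rw [Module.finrank_fin_fun] at hrn
  rw [rank_expand_s18, ← Fintype.range_linearCombination]
  change n - 1 ≤ Module.finrank Fq (LinearMap.range ψ)
  omega

/-- Example 3.3 of the paper: with `m ≥ 2n-2`, `n ≤ q+2`, a polynomial basis
`(1, β, …, β^{m-1})` of `F_{q^m}` over `F_q`, and distinct nonzero
`a_1, …, a_{n-3} ∈ F_q`, the `2×n` matrix with rows
`(1, 0, β², β³, …, β^{n-2}, β^n)` and `(0, 1, a₁β, a₂β², …, a_{n-3}β^{n-3}, β^{n-2})`
generates a systematic MRD code: every nonzero codeword, expanded over `F_q`,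
has rank at least `n-1`. -/
theorem stmt18 (Fq L : Type*) [Field Fq] [Fintype Fq] [Field L] [Algebra Fq L]
    (m n : ℕ) (hn : 3 ≤ n) (hm : 2 * n - 2 ≤ m) (hq : n ≤ Fintype.card Fq + 2)
    (β : L) (b : Module.Basis (Fin m) Fq L) (hb : ∀ i : Fin m, b i = β ^ (i : ℕ))
    (a : ℕ → Fq)
    (ha0 : ∀ i, 1 ≤ i → i ≤ n - 3 → a i ≠ 0)
    (hainj : ∀ i j, 1 ≤ i → i ≤ n - 3 → 1 ≤ j → j ≤ n - 3 → a i = a j → i = j)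
    (G : Matrix (Fin 2) (Fin n) L)
    (hG : ∀ (i : Fin 2) (j : Fin n), G i j =
      if (i : ℕ) = 0 then
        (if (j : ℕ) = 0 then 1 else if (j : ℕ) = 1 then 0
         else if (j : ℕ) = n - 1 then β ^ n else β ^ (j : ℕ))
      else
        (if (j : ℕ) = 0 then 0 else if (j : ℕ) = 1 then 1
         else if (j : ℕ) = n - 1 then β ^ (n - 2)
         else algebraMap Fq L (a ((j : ℕ) - 1)) * β ^ ((j : ℕ) - 1))) :
    ∀ u : Fin 2 → L, u ≠ 0 →
      n - 1 ≤ (expand b (Matrix.vecMul u G)).rank :=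
  stmt18_general Fq L m n hn hm β b hb a ha0 hainj G hG
end
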